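/- arXiv:1407.1691 — 6 statements merged into one kernel-verified Lean document; each statement's English description precedes it below -/
import Mathlib

section
/- Let Γ be a folded inverse X-digraph in which every cycle has length at least m. If a reduced nontrivial word w can be traced in Γ starting at the root and the flow π_w defined by w on Γ is identically zero, then |w| ≥ 3m. -/
open scoped Classical

/-- A rooted `X`-digraph: vertices of type `V`, edges labeled by `X` (these are the
positive edges; the letter `(x, false)` denotes traversal of a positive edge backwards,
i.e. along the inverse edge). -/
structure LGraph (X V : Type*) where
  root : V
  edge : V → X → V → Prop

/-- Folded (deterministic on positive labels): at most one `x`-edge out of each vertex. -/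
def LGraph.Folded {X V : Type*} (G : LGraph X V) : Prop :=
  ∀ v x w w', G.edge v x w → G.edge v x w' → w = w'

/-- Deterministic on inverse labels: at most one `x`-edge into each vertex.  Together with
`Folded` this says the inverse `X`-digraph is folded. -/
def LGraph.CoFolded {X V : Type*} (G : LGraph X V) : Prop :=
  ∀ v v' x w, G.edge v x w → G.edge v' x w → v = v'

/-- A word is reduced if it has no cancelling adjacent pair `x x⁻¹`. -/
def Reduced {X : Type*} (w : List (X × Bool)) : Prop :=
  w.Chain' fun a b => ¬(a.1 = b.1 ∧ a.2 ≠ b.2)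

/-- `IsTrail G vs w` : the list of vertices `vs` is the trace of the word `w`
(a list of signed letters) in `G`, consecutive vertices being joined by the
appropriately directed labeled edge. -/
def LGraph.IsTrail {X V : Type*} (G : LGraph X V) : List V → List (X × Bool) → Prop
  | [_], [] => True
  | v :: v' :: vs, (x, b) :: c =>
      (cond b (G.edge v x v') (G.edge v' x v)) ∧ LGraph.IsTrail G (v' :: vs) c
  | _, _ => False

/-- The flow of a word `w` traced along the vertex list `vs`: for each positive edge
`(a, x, b)` it counts the number of forward traversals minus backward traversals. -/
noncomputable def flowOf {X V : Type*} : List V → List (X × Bool) → V → X → V → ℤ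
  | v :: v' :: vs, (x, b) :: c => fun a y bb =>
      (if b = true ∧ a = v ∧ y = x ∧ bb = v' then 1 else 0) +
      (if b = false ∧ a = v' ∧ y = x ∧ bb = v then -1 else 0) +
      flowOf (v' :: vs) c a y bb
  | _, _ => fun _ _ _ => 0

/-!
Encode a walk of length `n` by its vertices `v : ℕ → V` and letters `w : ℕ → X × Bool`.
Zero flow forces the walk to be closed and pairs every step with an opposite step crossing the
same positive edge. If the first and last letters cancel, folding makes them cross the same
edge, and stripping them leaves a shorter walk of the same kind. Otherwise the word is
cyclically reduced; then some vertex is visited three times, since otherwise the step opposite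
to `i + 1` would have to be `j - 1` whenever steps `i < j` are opposite, and the opposite pairs
would nest forever. A vertex visited three times cuts the closed walk into three reduced cycles,
each of length at least `m`.
-/

open Finset

section SignedSequences

variable {X V : Type*} {v : ℕ → V} {w : ℕ → X × Bool} {n i j : ℕ}

def Cancels (a b : X × Bool) : Prop := a.1 = b.1 ∧ a.2 ≠ b.2

theorem Cancels.symm {a b : X × Bool} (h : Cancels a b) : Cancels b a := ⟨h.1.symm, h.2.symm⟩

def stepEdge (v : ℕ → V) (w : ℕ → X × Bool) (i : ℕ) : V × X × V :=
  if (w i).2 then (v i, (w i).1, v (i + 1)) else (v (i + 1), (w i).1, v i)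

def stepSign (w : ℕ → X × Bool) (i : ℕ) : ℤ := if (w i).2 then 1 else -1

noncomputable def seqFlow (n : ℕ) (v : ℕ → V) (w : ℕ → X × Bool) (e : V × X × V) : ℤ :=
  ∑ i ∈ range n, if stepEdge v w i = e then stepSign w i else 0

def OppositeSteps (v : ℕ → V) (w : ℕ → X × Bool) (i j : ℕ) : Prop :=
  stepEdge v w i = stepEdge v w j ∧ (w i).2 ≠ (w j).2

theorem OppositeSteps.symm (h : OppositeSteps v w i j) : OppositeSteps v w j i :=
  ⟨h.1.symm, h.2.symm⟩

theorem OppositeSteps.cancels (h : OppositeSteps v w i j) : Cancels (w i) (w j) := by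
  obtain ⟨he, hs⟩ := h
  unfold stepEdge at he
  cases hi : (w i).2 <;> cases hj : (w j).2 <;> simp_all [Prod.ext_iff, Cancels]

theorem OppositeSteps.vertex_eq (h : OppositeSteps v w i j) :
    v i = v (j + 1) ∧ v (i + 1) = v j := by
  obtain ⟨he, hs⟩ := h
  unfold stepEdge at he
  cases hi : (w i).2 <;> cases hj : (w j).2 <;> simp_all [Prod.ext_iff]

theorem oppositeSteps_of_cancels (h : Cancels (w i) (w j)) (h₁ : v i = v (j + 1))
    (h₂ : v (i + 1) = v j) : OppositeSteps v w i j := by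
  obtain ⟨hl, hs⟩ := h
  refine ⟨?_, hs⟩
  unfold stepEdge
  cases hi : (w i).2 <;> cases hj : (w j).2 <;> simp_all

theorem not_oppositeSteps_self : ¬OppositeSteps v w i i := fun h => h.2 rfl

theorem stepSign_add_eq_zero (h : (w i).2 ≠ (w j).2) : stepSign w i + stepSign w j = 0 := by
  unfold stepSign
  cases hi : (w i).2 <;> cases hj : (w j).2 <;> simp_all

theorem stepSign_ne_zero (w : ℕ → X × Bool) (i : ℕ) : stepSign w i ≠ 0 := by
  unfold stepSign; split <;> simp

theorem exists_oppositeSteps_of_seqFlow_eq_zero (hflow : seqFlow n v w = 0) (hi : i < n) :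
    ∃ j < n, OppositeSteps v w i j := by
  by_contra! hnone
  have hsame : ∀ j ∈ range n, (if stepEdge v w j = stepEdge v w i then stepSign w j else 0) =
      if stepEdge v w j = stepEdge v w i then stepSign w i else 0 := by
    intro j hj
    split_ifs with he
    · by_contra hne
      refine hnone j (mem_range.mp hj) ⟨he.symm, fun hs => hne ?_⟩
      simp only [stepSign, hs]
    · rfl
  have hzero := congrFun hflow (stepEdge v w i)
  simp only [seqFlow, Pi.zero_apply, sum_congr rfl hsame, sum_ite, sum_const_zero, add_zero,
    sum_const, smul_eq_zero, card_eq_zero, stepSign_ne_zero, or_false] at hzero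
  exact (filter_eq_empty_iff.mp hzero) (mem_range.mpr hi) rfl

theorem sum_stepSign_mul_eq_zero (hflow : seqFlow n v w = 0) (g : V × X × V → ℤ) :
    ∑ i ∈ range n, stepSign w i * g (stepEdge v w i) = 0 := by
  rw [← sum_fiberwise_of_maps_to (fun i hi => mem_image_of_mem (stepEdge v w) hi)]
  refine sum_eq_zero fun e _ => ?_
  have hfiber : ∑ i ∈ range n with stepEdge v w i = e, stepSign w i = 0 := by
    rw [sum_filter]; exact congrFun hflow e
  rw [sum_congr rfl fun i hi => by rw [(mem_filter.mp hi).2], ← sum_mul, hfiber, zero_mul]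

/-- Weigh each edge by `[terminus = v 0] - [origin = v 0]` and telescope. -/
theorem last_eq_first_of_seqFlow_eq_zero (hflow : seqFlow n v w = 0) : v n = v 0 := by
  let f : ℕ → ℤ := fun i => if v i = v 0 then 1 else 0
  have hstep : ∀ i, f (i + 1) - f i =
      stepSign w i * ((if (stepEdge v w i).2.2 = v 0 then 1 else 0) -
        if (stepEdge v w i).1 = v 0 then 1 else 0) := by
    intro i
    simp only [f, stepEdge, stepSign]
    split_ifs <;> simp_all
  have htele := sum_range_sub f n
  rw [sum_congr rfl fun i _ => hstep i, sum_stepSign_mul_eq_zero hflow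
    (fun e => (if e.2.2 = v 0 then 1 else 0) - if e.1 = v 0 then 1 else 0)] at htele
  by_contra hne
  simp [f, hne] at htele

theorem seqFlow_succ_succ_of_oppositeSteps {k : ℕ} (h : OppositeSteps v w 0 (k + 1)) :
    seqFlow (k + 2) v w = seqFlow k (fun i => v (i + 1)) (fun i => w (i + 1)) := by
  funext e
  have hends : (if stepEdge v w 0 = e then stepSign w 0 else 0) +
      (if stepEdge v w (k + 1) = e then stepSign w (k + 1) else 0) = 0 := by
    rw [← h.1]
    split_ifs
    · exact stepSign_add_eq_zero h.2
    · rfl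
  have hshift : ∀ i,
      stepEdge (fun i => v (i + 1)) (fun i => w (i + 1)) i = stepEdge v w (i + 1) ∧
        stepSign (fun i => w (i + 1)) i = stepSign w (i + 1) := fun i => ⟨rfl, rfl⟩
  simp only [seqFlow, hshift]
  rw [sum_range_succ', sum_range_succ]
  linarith

end SignedSequences

section VisitsThrice

variable {X V : Type*} {v : ℕ → V} {w : ℕ → X × Bool} {n : ℕ}

def VisitsThrice (n : ℕ) (v : ℕ → V) : Prop :=
  ∃ a b c, a < b ∧ b < c ∧ c < n ∧ v a = v b ∧ v b = v c

theorem visitsThrice_of_lt_of_lt {x y z : ℕ} (hxy : x < y) (hxz : x < z) (hyz : y ≠ z)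
    (hy : y < n) (hz : z < n) (h₁ : v x = v y) (h₂ : v x = v z) : VisitsThrice n v := by
  rcases lt_or_gt_of_ne hyz with hlt | hgt
  · exact ⟨x, y, z, hxy, hlt, hz, h₁, h₁.symm.trans h₂⟩
  · exact ⟨x, z, y, hxz, hgt, hy, h₂, h₂.symm.trans h₁⟩

theorem OppositeSteps.add_two_le {i j : ℕ} (hred : ∀ i, i + 1 < n → ¬Cancels (w i) (w (i + 1)))
    (h : OppositeSteps v w i j) (hij : i < j) (hj : j < n) : i + 2 ≤ j := by
  by_contra hlt
  obtain rfl : j = i + 1 := by omega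
  exact hred i hj h.cancels

/-- Any step opposite to `i + 1` other than `j - 1` would give a third visit to
`v (i + 1) = v j`. -/
theorem OppositeSteps.succ_pred {i j : ℕ} (hclosed : v n = v 0) (hflow : seqFlow n v w = 0)
    (hred : ∀ i, i + 1 < n → ¬Cancels (w i) (w (i + 1))) (hthrice : ¬VisitsThrice n v)
    (h : OppositeSteps v w i j) (hij : i < j) (hj : j < n) :
    OppositeSteps v w (i + 1) (j - 1) ∧ i + 1 < j - 1 := by
  have hgap := h.add_two_le hred hij hj
  have hvj := h.vertex_eq.2
  obtain ⟨p, hp, hop⟩ := exists_oppositeSteps_of_seqFlow_eq_zero hflow (show i + 1 < n by omega)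
  rcases lt_trichotomy p (i + 1) with hlt | rfl | hgt
  · have := hop.symm.add_two_le hred hlt (by omega)
    exact (hthrice (visitsThrice_of_lt_of_lt (y := i + 1) (z := j) (by omega) (by omega)
      (by omega) (by omega) hj hop.symm.vertex_eq.2 (hop.symm.vertex_eq.2.trans hvj))).elim
  · exact (not_oppositeSteps_self hop).elim
  · have := hop.add_two_le hred hgt hp
    have hvp := hop.vertex_eq.1
    by_cases hpj : p + 1 = j
    · obtain rfl : p = j - 1 := by omega
      exact ⟨hop, by omega⟩
    by_cases hpn : p + 1 = n
    · rw [hpn, hclosed] at hvp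
      exact (hthrice ⟨0, i + 1, j, by omega, by omega, hj, hvp.symm, hvj⟩).elim
    · exact (hthrice (visitsThrice_of_lt_of_lt (x := i + 1) (y := j) (z := p + 1) (by omega)
        (by omega) (Ne.symm hpj) hj (by omega) hvj hvp)).elim

theorem OppositeSteps.visitsThrice {i j : ℕ} (hclosed : v n = v 0) (hflow : seqFlow n v w = 0)
    (hred : ∀ i, i + 1 < n → ¬Cancels (w i) (w (i + 1)))
    (h : OppositeSteps v w i j) (hij : i < j) (hj : j < n) : VisitsThrice n v := by
  by_contra hthrice
  obtain ⟨hinner, hlt⟩ := h.succ_pred hclosed hflow hred hthrice hij hj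
  exact hthrice (hinner.visitsThrice hclosed hflow hred hlt (by omega))
termination_by j - i
decreasing_by omega

theorem visitsThrice_of_seqFlow_eq_zero (hn : 0 < n) (hflow : seqFlow n v w = 0)
    (hred : ∀ i, i + 1 < n → ¬Cancels (w i) (w (i + 1))) : VisitsThrice n v := by
  obtain ⟨j, hj, hop⟩ := exists_oppositeSteps_of_seqFlow_eq_zero hflow hn
  have hj0 : 0 < j := Nat.pos_of_ne_zero fun h => not_oppositeSteps_self (h ▸ hop)
  exact hop.visitsThrice (last_eq_first_of_seqFlow_eq_zero hflow) hflow hred hj0 hj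

end VisitsThrice

theorem rel_mod_add_one_mod {n : ℕ} {P : ℕ → ℕ → Prop} (hn : 0 < n)
    (h : ∀ i, i + 1 < n → P i (i + 1)) (hwrap : P (n - 1) 0) (i : ℕ) :
    P (i % n) ((i + 1) % n) := by
  have hsucc : (i + 1) % n = (i % n + 1) % n := by
    conv_lhs => rw [← Nat.div_add_mod i n, add_assoc, Nat.mul_add_mod]
  rcases Nat.lt_or_ge (i % n + 1) n with hlt | hge
  · rw [hsucc, Nat.mod_eq_of_lt hlt]; exact h _ hlt
  · have hlast : i % n = n - 1 := by have := Nat.mod_lt i hn; omega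
    rw [hsucc, hlast, Nat.sub_add_cancel hn, Nat.mod_self]; exact hwrap

theorem List.map_range_getD {α : Type*} (l : List α) (d : α) :
    (List.range l.length).map (l.getD · d) = l := by
  refine List.ext_getElem (by simp) fun i h₁ h₂ => ?_
  simp [List.getElem?_eq_getElem h₂]

theorem List.map_range_succ_eq_cons {α : Type*} (f : ℕ → α) (k : ℕ) :
    (List.range (k + 1)).map f = f 0 :: (List.range k).map (fun i => f (i + 1)) := by
  simp [List.range_succ_eq_map, Function.comp_def]

theorem reduced_map_range_iff {X : Type*} {k : ℕ} {w : ℕ → X × Bool} :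
    Reduced ((List.range k).map w) ↔ ∀ i, i + 1 < k → ¬Cancels (w i) (w (i + 1)) := by
  change List.IsChain _ _ ↔ _
  simp only [List.isChain_map, List.isChain_range, Cancels]
  exact ⟨fun h i hi => h i (by omega), fun h i hi => h i (by omega)⟩

theorem flowOf_cons_cons {X V : Type*} (u u' : V) (vs : List V) (l : X × Bool)
    (c : List (X × Bool)) (a : V) (x : X) (b : V) :
    flowOf (u :: u' :: vs) (l :: c) a x b =
      (if l.2 = true ∧ a = u ∧ x = l.1 ∧ b = u' then 1 else 0) +
      (if l.2 = false ∧ a = u' ∧ x = l.1 ∧ b = u then -1 else 0) + flowOf (u' :: vs) c a x b := by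
  obtain ⟨y, s⟩ := l
  rfl

theorem flowOf_map_range {X V : Type*} (k : ℕ) (v : ℕ → V) (w : ℕ → X × Bool) (a : V) (x : X)
    (b : V) :
    flowOf ((List.range (k + 1)).map v) ((List.range k).map w) a x b =
      seqFlow k v w (a, x, b) := by
  induction k generalizing v w with
  | zero => simp [flowOf, seqFlow]
  | succ k ih =>
    rw [List.map_range_succ_eq_cons, List.map_range_succ_eq_cons, List.map_range_succ_eq_cons,
      flowOf_cons_cons, ← List.map_range_succ_eq_cons (fun i => v (i + 1)), ih]
    simp only [seqFlow]
    rw [sum_range_succ', add_comm]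
    congr 1
    unfold stepEdge stepSign
    cases (w 0).2 <;> simp [Prod.ext_iff, eq_comm, and_left_comm]

namespace LGraph

variable {X V : Type*} (G : LGraph X V)

def Step (u : V) (l : X × Bool) (u' : V) : Prop := cond l.2 (G.edge u l.1 u') (G.edge u' l.1 u)

def CyclesAtLeast (m : ℕ) : Prop :=
  ∀ (v : V) (vs : List V) (c : List (X × Bool)), c ≠ [] → Reduced c →
    G.IsTrail vs c → vs.head? = some v → vs.getLast? = some v → m ≤ c.length

variable {G}

theorem isTrail_cons_cons {u u' : V} {vs : List V} {l : X × Bool} {c : List (X × Bool)} :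
    G.IsTrail (u :: u' :: vs) (l :: c) ↔ G.Step u l u' ∧ G.IsTrail (u' :: vs) c := by
  obtain ⟨x, b⟩ := l
  rfl

theorem IsTrail.length_eq : ∀ {vs : List V} {c : List (X × Bool)},
    G.IsTrail vs c → vs.length = c.length + 1
  | [_], [], _ => rfl
  | _ :: _ :: _, _ :: _, h => by
    rw [isTrail_cons_cons] at h
    simp [h.2.length_eq]
  | [], _, h | [_], _ :: _, h | _ :: _ :: _, [], h => by
    cases h

theorem isTrail_map_range_iff {k : ℕ} {v : ℕ → V} {w : ℕ → X × Bool} :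
    G.IsTrail ((List.range (k + 1)).map v) ((List.range k).map w) ↔
      ∀ i < k, G.Step (v i) (w i) (v (i + 1)) := by
  induction k generalizing v w with
  | zero => simp [IsTrail]
  | succ k ih =>
    rw [List.map_range_succ_eq_cons, List.map_range_succ_eq_cons, List.map_range_succ_eq_cons,
      isTrail_cons_cons, ← List.map_range_succ_eq_cons (fun i => v (i + 1)), ih,
      Nat.forall_lt_succ_left]

theorem eq_of_step_of_step_of_cancels (hf : G.Folded) (hc : G.CoFolded) {p q r : V}
    {l l' : X × Bool} (h₁ : G.Step p l q) (h₂ : G.Step q l' r) (h : Cancels l l') : p = r := by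
  obtain ⟨⟨x, b⟩, ⟨x', b'⟩⟩ := l, l'
  obtain ⟨rfl, hb⟩ : x = x' ∧ b ≠ b' := h
  cases b <;> cases b'
  · exact absurd rfl hb
  · exact hf _ _ _ _ h₁ h₂
  · exact hc _ _ _ _ h₁ h₂
  · exact absurd rfl hb

variable {m : ℕ}

theorem CyclesAtLeast.le_of_closed {k : ℕ} {v : ℕ → V} {w : ℕ → X × Bool}
    (hcyc : G.CyclesAtLeast m) (hk : 0 < k)
    (hstep : ∀ i < k, G.Step (v i) (w i) (v (i + 1)))
    (hred : ∀ i, i + 1 < k → ¬Cancels (w i) (w (i + 1))) (hclosed : v k = v 0) : m ≤ k := by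
  simpa using hcyc (v 0) ((List.range (k + 1)).map v) ((List.range k).map w)
    (by simpa using hk.ne') (reduced_map_range_iff.mpr hred) (isTrail_map_range_iff.mpr hstep)
    (by simp [List.head?_range]) (by simp [List.getLast?_range, hclosed])

/-- A vertex visited at times `a < b < c` of an `n`-periodic reduced walk cuts one period into
three cycles, of lengths `b - a`, `c - b` and `n + a - c`. -/
theorem CyclesAtLeast.three_mul_le_of_periodic {n : ℕ} {v : ℕ → V} {w : ℕ → X × Bool}
    (hcyc : G.CyclesAtLeast m) (hper : ∀ i, v (i + n) = v i)
    (hstep : ∀ i, G.Step (v i) (w i) (v (i + 1)))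
    (hred : ∀ i, ¬Cancels (w i) (w (i + 1))) (hthrice : VisitsThrice n v) : 3 * m ≤ n := by
  obtain ⟨a, b, c, hab, hbc, hcn, hvab, hvbc⟩ := hthrice
  have hsegment : ∀ s k, 0 < k → v (s + k) = v s → m ≤ k := fun s k hk h =>
    hcyc.le_of_closed (v := fun i => v (s + i)) (w := fun i => w (s + i)) hk
      (fun i _ => hstep (s + i)) (fun i _ => hred (s + i)) h
  have h₁ := hsegment a (b - a) (by omega) (by rw [Nat.add_sub_cancel' hab.le, hvab])
  have h₂ := hsegment b (c - b) (by omega) (by rw [Nat.add_sub_cancel' hbc.le, hvbc])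
  have h₃ := hsegment c (n + a - c) (by omega)
    (by rw [show c + (n + a - c) = a + n by omega, hper, hvab, hvbc])
  omega

theorem three_mul_le_of_seqFlow_eq_zero (hf : G.Folded) (hc : G.CoFolded)
    (hcyc : G.CyclesAtLeast m) {n : ℕ} {v : ℕ → V} {w : ℕ → X × Bool} (hn : 0 < n)
    (hstep : ∀ i < n, G.Step (v i) (w i) (v (i + 1)))
    (hred : ∀ i, i + 1 < n → ¬Cancels (w i) (w (i + 1))) (hflow : seqFlow n v w = 0) :
    3 * m ≤ n := by
  have hclosed := last_eq_first_of_seqFlow_eq_zero hflow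
  by_cases hseam : Cancels (w (n - 1)) (w 0)
  · -- folding makes the cancelling first and last letters cross the same edge: strip them
    obtain ⟨k, rfl⟩ : ∃ k, n = k + 3 := by
      have : n ≠ 1 := by rintro rfl; exact hseam.2 rfl
      have : n ≠ 2 := by rintro rfl; exact hred 0 one_lt_two hseam.symm
      exact ⟨n - 3, by omega⟩
    have hvk : v (k + 2) = v 1 :=
      eq_of_step_of_step_of_cancels hf hc (hstep (k + 2) (by omega)) (hclosed ▸ hstep 0 hn) hseam
    have hop : OppositeSteps v w 0 (k + 2) := (oppositeSteps_of_cancels hseam hvk hclosed).symm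
    have := three_mul_le_of_seqFlow_eq_zero hf hc hcyc (n := k + 1) (v := fun i => v (i + 1))
      (w := fun i => w (i + 1)) k.succ_pos (fun i hi => hstep (i + 1) (by omega))
      (fun i hi => hred (i + 1) (by omega))
      (by rw [← seqFlow_succ_succ_of_oppositeSteps hop, hflow])
    omega
  · -- the word is cyclically reduced: repeat the closed walk periodically
    refine hcyc.three_mul_le_of_periodic (v := fun i => v (i % n)) (w := fun i => w (i % n))
      (fun i => by simp only [Nat.add_mod_right])
      (rel_mod_add_one_mod (P := fun i j => G.Step (v i) (w i) (v j)) hn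
        (fun i hi => hstep i (by omega)) ?_)
      (rel_mod_add_one_mod (P := fun i j => ¬Cancels (w i) (w j)) hn hred hseam) ?_
    · simpa only [Nat.sub_add_cancel hn, hclosed] using hstep (n - 1) (by omega)
    · obtain ⟨a, b, c, hab, hbc, hcn, hvab, hvbc⟩ := visitsThrice_of_seqFlow_eq_zero hn hflow hred
      refine ⟨a, b, c, hab, hbc, hcn, ?_⟩
      simpa only [Nat.mod_eq_of_lt (hab.trans (hbc.trans hcn)), Nat.mod_eq_of_lt (hbc.trans hcn),
        Nat.mod_eq_of_lt hcn] using ⟨hvab, hvbc⟩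
termination_by n

end LGraph

theorem stmt0_general {X V : Type*} (G : LGraph X V) (hf : G.Folded) (hc : G.CoFolded) (m : ℕ)
    (hcyc : ∀ (v : V) (vs : List V) (c : List (X × Bool)), c ≠ [] → Reduced c →
      G.IsTrail vs c → vs.head? = some v → vs.getLast? = some v → m ≤ c.length)
    (w : List (X × Bool)) (hw : w ≠ []) (hred : Reduced w) (vs : List V)
    (htr : G.IsTrail vs w)
    (hzero : flowOf vs w = fun _ _ _ => 0) :
    3 * m ≤ w.length := by
  obtain ⟨n, u, rfl⟩ : ∃ n u, w = (List.range n).map u :=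
    ⟨_, _, (w.map_range_getD (w.head hw)).symm⟩
  have hlen : vs.length = n + 1 := by simpa using htr.length_eq
  obtain ⟨v, rfl⟩ : ∃ v, vs = (List.range (n + 1)).map v :=
    ⟨_, by rw [← hlen, vs.map_range_getD G.root]⟩
  rw [List.length_map, List.length_range]
  exact LGraph.three_mul_le_of_seqFlow_eq_zero hf hc hcyc
    (Nat.pos_of_ne_zero (by simpa using hw)) (LGraph.isTrail_map_range_iff.mp htr)
    (reduced_map_range_iff.mp hred)
    (funext fun ⟨a, x, b⟩ => by rw [← flowOf_map_range, hzero]; rfl)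

/-- If every (reduced nontrivial) cycle of a folded inverse `X`-digraph `Γ` has length at
least `m`, and a reduced nontrivial word `w` can be traced in `Γ` from the root with
identically zero flow, then `|w| ≥ 3m`. -/
theorem stmt0 {X V : Type*} (G : LGraph X V) (hf : G.Folded) (hc : G.CoFolded) (m : ℕ)
    (hcyc : ∀ (v : V) (vs : List V) (c : List (X × Bool)), c ≠ [] → Reduced c →
      G.IsTrail vs c → vs.head? = some v → vs.getLast? = some v → m ≤ c.length)
    (w : List (X × Bool)) (hw : w ≠ []) (hred : Reduced w) (vs : List V)
    (htr : G.IsTrail vs w) (hroot : vs.head? = some G.root)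
    (hzero : flowOf vs w = fun _ _ _ => 0) :
    3 * m ≤ w.length :=
  stmt0_general G hf hc m hcyc w hw hred vs htr hzero
end

section
/- Let F be a free group of rank r and F^{(d)} its d-th derived subgroup. If w ∈ F is a nontrivial reduced word with w ∈ F^{(d)} (i.e. w = 1 in the free solvable group S_{r,d} = F/F^{(d)}), then |w| ≥ 3^d. -/
/-!
Induction on `d`. Put `N = F^{(d)}` and read a cyclically reduced word `w ∈ [N, N]` as a closed
walk in the Cayley graph of `F / N`. The net flow of a walk through the edges of this graph is a
homomorphism on `N` with abelian target, so it vanishes on `[N, N]`: every step of `w` is reversed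
by another step. If some vertex is visited three times, the walk splits into three nonempty closed
subwalks; these are reduced words in `N`, so each has length at least `3^d`. Otherwise the vertex
entered by step `j`, which is also where the reverse of step `j` starts and where the reverse of
step `j + 1` ends, is visited only twice, so the reverse of step `j + 1` immediately precedes the
reverse of step `j`. Then `j ↦ reverse of j` is a reflection of the cycle `ℤ / |w|`, which fixes a
step or swaps two adjacent ones; neither is possible in a cyclically reduced word.
-/

namespace ZMod

variable {n : ℕ} [NeZero n]

theorem val_sub_add_val_sub_eq {a b : ZMod n} (h : a ≠ b) : (a - b).val + (b - a).val = n := by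
  have : NeZero (a - b) := ⟨sub_ne_zero.mpr h⟩
  rw [← neg_sub a b, val_neg_of_ne_zero]
  have := (a - b).val_lt
  omega

theorem val_sub_add_val_sub_add_val_sub_eq_or {a b c : ZMod n} (hab : a ≠ b) (hbc : b ≠ c)
    (hca : c ≠ a) :
    (b - a).val + (c - b).val + (a - c).val = n ∨ (a - b).val + (b - c).val + (c - a).val = n := by
  have hdvd : n ∣ (b - a).val + (c - b).val + (a - c).val := by
    rw [← natCast_eq_zero_iff]
    push_cast [natCast_zmod_val]
    ring
  obtain ⟨k, hk⟩ := hdvd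
  have h₁ := val_sub_add_val_sub_eq hab
  have h₂ := val_sub_add_val_sub_eq hbc
  have h₃ := val_sub_add_val_sub_eq hca
  have hpos : 0 < (b - a).val := val_pos.mpr (sub_ne_zero.mpr hab.symm)
  have hk3 : k < 3 := by
    by_contra! hk3
    have := (b - a).val_lt; have := (c - b).val_lt; have := (a - c).val_lt
    nlinarith
  interval_cases k <;> omega

theorem exists_apply_eq_self_or_apply_eq_add_one {ρ : ZMod n → ZMod n}
    (hρ : ∀ j, ρ (j + 1) = ρ j - 1) : ∃ t, ρ t = t ∨ ρ t = t + 1 := by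
  have hlin : ∀ m : ℕ, ρ m = ρ 0 - m := by
    intro m
    induction m with
    | zero => simp
    | succ m ih => push_cast; rw [hρ, ih]; ring
  obtain ⟨t, ht | ht⟩ := Nat.even_or_odd' (ρ 0).val
  all_goals
    refine ⟨t, ?_⟩
    rw [hlin, ← natCast_zmod_val (ρ 0), ht]
    push_cast
  · left; ring
  · right; ring

theorem three_mul_le_of_forall_exists_reverse_step {β γ : Type*} {inv : β → β}
    (hinv : Function.Involutive inv) (hfix : ∀ x, inv x ≠ x) {ℓ : ZMod n → β} {V : ZMod n → γ}
    {m : ℕ} (hcyc : ∀ j, ℓ (j + 1) ≠ inv (ℓ j))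
    (hrev : ∀ j, ∃ k, ℓ k = inv (ℓ j) ∧ V k = V (j + 1) ∧ V (k + 1) = V j)
    (harc : ∀ a b, a ≠ b → V a = V b → m ≤ (b - a).val) : 3 * m ≤ n := by
  by_cases h3 : ∃ a b c, a ≠ b ∧ b ≠ c ∧ c ≠ a ∧ V a = V b ∧ V b = V c
  · obtain ⟨a, b, c, hab, hbc, hca, hVab, hVbc⟩ := h3
    have hVca : V c = V a := (hVab.trans hVbc).symm
    rcases val_sub_add_val_sub_add_val_sub_eq_or hab hbc hca with h | h
    · have := harc a b hab hVab; have := harc b c hbc hVbc; have := harc c a hca hVca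
      omega
    · have := harc b a hab.symm hVab.symm; have := harc c b hbc.symm hVbc.symm
      have := harc a c hca.symm hVca.symm
      omega
  · push Not at h3
    exfalso
    choose ρ hρℓ hρV hρV' using hrev
    -- the vertex `V (j + 1)` is visited at `j + 1`, at `ρ j` and at `ρ (j + 1) + 1`
    have hρ : ∀ j, ρ (j + 1) = ρ j - 1 := by
      intro j
      by_contra hne
      refine h3 (j + 1) (ρ j) (ρ (j + 1) + 1) ?_ ?_ ?_ (hρV j).symm ((hρV j).trans (hρV' _).symm)
      · intro h
        exact hcyc j (h ▸ hρℓ j)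
      · intro h
        exact hne (eq_sub_of_add_eq h.symm)
      · intro h
        apply hcyc j
        rw [← hinv (ℓ (j + 1)), ← hρℓ (j + 1), add_right_cancel h]
    obtain ⟨t, ht | ht⟩ := exists_apply_eq_self_or_apply_eq_add_one hρ
    · exact hfix _ (ht ▸ hρℓ t).symm
    · exact hcyc t (ht ▸ hρℓ t)

end ZMod

namespace List

def cyclicGet {β : Type*} (L : List β) [NeZero L.length] (j : ZMod L.length) : β :=
  L[j.val]'j.val_lt

end List

namespace FreeGroup

variable {α G : Type*} [Group G] (π : FreeGroup α →* G)

theorem map_mk_cons (x : α × Bool) (L : List (α × Bool)) :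
    π (mk (x :: L)) = π (mk [x]) * π (mk L) := by
  rw [← π.map_mul, mul_mk, List.singleton_append]

theorem map_mk_concat (L : List (α × Bool)) (x : α × Bool) :
    π (mk (L ++ [x])) = π (mk L) * π (mk [x]) := by
  rw [← π.map_mul, mul_mk]

theorem map_mk_singleton_inv (x : α × Bool) : π (mk [(x.1, !x.2)]) = (π (mk [x]))⁻¹ := by
  rw [← π.map_inv, inv_mk]
  simp [invRev]

section CayleyGraph

/-- The edge of the Cayley graph of `G` crossed by reading the letter `x` at the vertex `g`; the
edge `(h, a)` joins `h` to `h * π (of a)`. -/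
def crossedEdge (g : G) (x : α × Bool) : G × α := (if x.2 then g else g * π (mk [x]), x.1)

theorem crossedEdge_mul_singleton_inv (g : G) (x : α × Bool) :
    crossedEdge π (g * π (mk [x])) (x.1, !x.2) = crossedEdge π g x := by
  rw [crossedEdge, crossedEdge, map_mk_singleton_inv, mul_inv_cancel_right]
  obtain ⟨a, _ | _⟩ := x <;> rfl

theorem eq_of_crossedEdge_eq {g h : G} {x y : α × Bool}
    (he : crossedEdge π h y = crossedEdge π g x) (hy : y.2 = !x.2) :
    y = (x.1, !x.2) ∧ h = g * π (mk [x]) := by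
  obtain ⟨a, _ | _⟩ := x <;> obtain ⟨b, _ | _⟩ := y <;> simp [crossedEdge] at he hy ⊢
  · exact he.symm
  · obtain ⟨rfl, rfl⟩ := he
    have hinv : π (mk [(b, false)]) = (π (mk [(b, true)]))⁻¹ := map_mk_singleton_inv π (b, true)
    rw [hinv, inv_mul_cancel_right]
    exact ⟨rfl, rfl⟩

variable [DecidableEq α] [DecidableEq G]

def flow (g : G) : List (α × Bool) → G × α → ℤ
  | [] => 0
  | x :: L => Pi.single (crossedEdge π g x) (if x.2 then 1 else -1) + flow (g * π (mk [x])) L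

@[simp] theorem flow_nil (g : G) : flow π g [] = 0 := rfl

theorem flow_cons (g : G) (x : α × Bool) (L : List (α × Bool)) :
    flow π g (x :: L) =
      Pi.single (crossedEdge π g x) (if x.2 then 1 else -1) + flow π (g * π (mk [x])) L := rfl

theorem flow_append (g : G) (L₁ L₂ : List (α × Bool)) :
    flow π g (L₁ ++ L₂) = flow π g L₁ + flow π (g * π (mk L₁)) L₂ := by
  induction L₁ generalizing g with
  | nil => simp [← one_eq_mk]
  | cons x L ih =>
    rw [List.cons_append, flow_cons, flow_cons, ih, map_mk_cons π x L, mul_assoc, add_assoc]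

theorem flow_cons_cons_inv (g : G) (x : α × Bool) (L : List (α × Bool)) :
    flow π g (x :: (x.1, !x.2) :: L) = flow π g L := by
  rw [flow_cons, flow_cons, crossedEdge_mul_singleton_inv, map_mk_singleton_inv,
    mul_inv_cancel_right, ← add_assoc, ← Pi.single_add]
  obtain ⟨a, _ | _⟩ := x <;> simp

theorem Red.Step.flow_eq {L₁ L₂ : List (α × Bool)} (h : Red.Step L₁ L₂) (g : G) :
    flow π g L₁ = flow π g L₂ := by
  cases h with
  | @not L L' x b => rw [flow_append, flow_append, flow_cons_cons_inv π _ (x, b)]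

theorem Red.flow_eq {L₁ L₂ : List (α × Bool)} (h : Red L₁ L₂) (g : G) :
    flow π g L₁ = flow π g L₂ := by
  induction h with
  | refl => rfl
  | tail _ hstep ih => rw [ih, hstep.flow_eq]

theorem flow_toWord_mk (g : G) (L : List (α × Bool)) : flow π g (mk L).toWord = flow π g L := by
  rw [toWord_mk]
  exact (reduce.red.flow_eq π g).symm

theorem flow_toWord_mul (g : G) {u : FreeGroup α} (hu : π u = 1) (v : FreeGroup α) :
    flow π g (u * v).toWord = flow π g u.toWord + flow π g v.toWord := by
  rw [← mk_toWord (x := u), ← mk_toWord (x := v), mul_mk, flow_toWord_mk, flow_toWord_mk,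
    flow_toWord_mk, flow_append, mk_toWord, hu, mul_one]

def flowHom : π.ker →* Multiplicative (G × α → ℤ) where
  toFun u := .ofAdd (flow π 1 (u : FreeGroup α).toWord)
  map_one' := by simp
  map_mul' u v := by
    simp only [Subgroup.coe_mul, flow_toWord_mul π 1 (MonoidHom.mem_ker.mp u.2)]
    rfl

theorem flow_toWord_eq_zero_of_mem_commutator {w : FreeGroup α} (hw : w ∈ ⁅π.ker, π.ker⁆) :
    flow π 1 w.toWord = 0 := by
  rw [← Subgroup.map_subtype_commutator] at hw
  obtain ⟨u, hu, rfl⟩ := hw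
  exact congrArg Multiplicative.toAdd (Abelianization.commutator_subset_ker (flowHom π) hu)

theorem flow_eq_sum (g : G) (L : List (α × Bool)) :
    flow π g L = ∑ j : Fin L.length,
      Pi.single (crossedEdge π (g * π (mk (L.take j))) L[j]) (if L[j].2 then 1 else -1) := by
  induction L generalizing g with
  | nil => simp
  | cons x L ih =>
    rw [flow_cons, ih]
    change _ = ∑ j : Fin (L.length + 1), _
    rw [Fin.sum_univ_succ]
    congr 1
    · simp only [Fin.val_zero, List.take_zero, ← one_eq_mk, π.map_one, mul_one]
      rfl
    · refine Finset.sum_congr rfl fun j _ => ?_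
      simp only [Fin.val_succ, List.take_succ_cons]
      rw [map_mk_cons π x (L.take j), mul_assoc]
      rfl

theorem exists_reverse_crossing_of_mem_commutator {L : List (α × Bool)}
    (hL : mk L ∈ ⁅π.ker, π.ker⁆) {j : ℕ} (hj : j < L.length) :
    ∃ k, ∃ hk : k < L.length, L[k] = (L[j].1, !L[j].2) ∧
      π (mk (L.take k)) = π (mk (L.take j)) * π (mk [L[j]]) := by
  set e := crossedEdge π (π (mk (L.take j))) L[j]
  set s : ℤ := if L[j].2 then 1 else -1
  have hzero := congrFun (flow_toWord_eq_zero_of_mem_commutator π hL) e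
  rw [flow_toWord_mk, flow_eq_sum, Finset.sum_apply] at hzero
  simp only [one_mul] at hzero
  by_contra! hno
  have hsum : s * _ = s * 0 := congrArg (s * ·) hzero
  rw [mul_zero, Finset.mul_sum] at hsum
  -- otherwise every crossing of `e` is in the direction of the `j`-th one
  refine (Finset.sum_pos' (fun k _ => ?_) ⟨⟨j, hj⟩, Finset.mem_univ _, ?_⟩).ne' hsum
  · rw [Pi.single_apply]
    by_cases he : e = crossedEdge π (π (mk (L.take k))) L[k]
    · rw [if_pos he]
      by_cases hk : L[k].2 = !L[j].2
      · obtain ⟨hletter, hvertex⟩ := eq_of_crossedEdge_eq π he.symm hk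
        exact absurd hvertex (hno k k.2 hletter)
      · rw [Bool.eq_not, not_not] at hk
        rw [hk]
        exact mul_self_nonneg s
    · rw [if_neg he, mul_zero]
  · change 0 < s * (Pi.single e s : G × α → ℤ) e
    rw [Pi.single_eq_same]
    exact mul_self_pos.mpr (by simp only [s]; split_ifs <;> norm_num)

end CayleyGraph

section CyclicWord

variable {L : List (α × Bool)} [NeZero L.length]

theorem IsCyclicallyReduced.cyclicGet_add_one (h : IsCyclicallyReduced L) (j : ZMod L.length) :
    (L.cyclicGet j).1 = (L.cyclicGet (j + 1)).1 → (L.cyclicGet j).2 = (L.cyclicGet (j + 1)).2 := by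
  have hval : (j + 1).val = (j.val + 1) % L.length := by
    rw [← ZMod.val_natCast, Nat.cast_succ, ZMod.natCast_zmod_val]
  simp only [List.cyclicGet, hval]
  rcases (show j.val + 1 ≤ L.length from j.val_lt).lt_or_eq with hlt | heq
  · simp only [Nat.mod_eq_of_lt hlt]
    exact h.isReduced.getElem j.val hlt
  · simp only [heq, Nat.mod_self]
    refine h.2 _ ?_ _ ?_
    · simp [List.getLast?_eq_getElem?, ← heq]
    · simp [List.head?_eq_getElem?]

theorem IsCyclicallyReduced.isReduced_ofFn_cyclicGet (h : IsCyclicallyReduced L)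
    (a : ZMod L.length) (s : ℕ) : IsReduced (List.ofFn fun i : Fin s => L.cyclicGet (a + i)) := by
  refine List.isChain_ofFn.mpr fun i _ => ?_
  simpa [add_assoc] using h.cyclicGet_add_one (a + i)

theorem map_mk_take_val_add_one (hL : π (mk L) = 1) (j : ZMod L.length) :
    π (mk (L.take (j + 1).val)) = π (mk (L.take j.val)) * π (mk [L.cyclicGet j]) := by
  have hval : (j + 1).val = (j.val + 1) % L.length := by
    rw [← ZMod.val_natCast, Nat.cast_succ, ZMod.natCast_zmod_val]
  rw [← map_mk_concat, List.cyclicGet, List.take_concat_get', hval]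
  rcases (show j.val + 1 ≤ L.length from j.val_lt).lt_or_eq with hlt | heq
  · rw [Nat.mod_eq_of_lt hlt]
  · rw [heq, Nat.mod_self, List.take_zero, List.take_length, hL, ← one_eq_mk, π.map_one]

theorem map_mk_ofFn_cyclicGet (hL : π (mk L) = 1) (a : ZMod L.length) (s : ℕ) :
    π (mk (List.ofFn fun i : Fin s => L.cyclicGet (a + i))) =
      (π (mk (L.take a.val)))⁻¹ * π (mk (L.take (a + s).val)) := by
  induction s with
  | zero => simp [← one_eq_mk]
  | succ s ih =>
    rw [List.ofFn_succ', List.concat_eq_append, map_mk_concat]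
    simp only [Fin.val_castSucc, Fin.val_last]
    rw [ih, Nat.cast_succ, ← add_assoc, map_mk_take_val_add_one π hL, mul_assoc]

end CyclicWord

variable [DecidableEq α]

theorem IsReduced.toWord_mk {L : List (α × Bool)} (h : IsReduced L) : (mk L).toWord = L := by
  rw [FreeGroup.toWord_mk, h.reduce_eq]

theorem three_mul_le_length_of_isCyclicallyReduced {m : ℕ}
    (hm : ∀ v ∈ π.ker, v ≠ 1 → m ≤ v.toWord.length) {L : List (α × Bool)}
    (hL : IsCyclicallyReduced L) (hne : L ≠ []) (hmem : mk L ∈ ⁅π.ker, π.ker⁆) :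
    3 * m ≤ L.length := by
  classical
  have : NeZero L.length := ⟨by simpa using hne⟩
  have hπL : π (mk L) = 1 := Subgroup.commutator_le_left _ _ hmem
  refine ZMod.three_mul_le_of_forall_exists_reverse_step (inv := fun x : α × Bool => (x.1, !x.2))
    (fun x => by simp) (fun x => by simp [Prod.ext_iff]) (ℓ := L.cyclicGet)
    (V := fun j => π (mk (L.take j.val))) (fun j h => ?_) (fun j => ?_) (fun a b hab hV => ?_)
  · simpa [h] using hL.cyclicGet_add_one j
  · obtain ⟨k, hk, hletter, hvertex⟩ := exists_reverse_crossing_of_mem_commutator π hmem j.val_lt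
    have hkval : (k : ZMod L.length).val = k := ZMod.val_cast_of_lt hk
    have hℓk : L.cyclicGet k = ((L.cyclicGet j).1, !(L.cyclicGet j).2) := by
      simpa [List.cyclicGet, hkval] using hletter
    refine ⟨k, hℓk, ?_, ?_⟩
    · rw [map_mk_take_val_add_one π hπL, hkval]
      exact hvertex
    · rw [map_mk_take_val_add_one π hπL, hℓk, map_mk_singleton_inv, hkval, hvertex]
      simp [List.cyclicGet]
  · set M := List.ofFn fun i : Fin (b - a).val => L.cyclicGet (a + i)
    have hword : (mk M).toWord = M := (hL.isReduced_ofFn_cyclicGet a _).toWord_mk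
    have hMker : mk M ∈ π.ker := by
      rw [MonoidHom.mem_ker, map_mk_ofFn_cyclicGet π hπL, ZMod.natCast_zmod_val, add_sub_cancel,
        hV, inv_mul_cancel]
    have hMne : mk M ≠ 1 := by
      rw [← toWord_injective.ne_iff, hword, toWord_one]
      simpa [M, sub_eq_zero] using hab.symm
    simpa [hword, M] using hm _ hMker hMne

theorem three_mul_le_length_of_mem_commutator {N : Subgroup (FreeGroup α)} [N.Normal] {m : ℕ}
    (hm : ∀ v ∈ N, v ≠ 1 → m ≤ v.toWord.length) {w : FreeGroup α} (hw : w ≠ 1)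
    (hmem : w ∈ ⁅N, N⁆) : 3 * m ≤ w.toWord.length := by
  set C := reduceCyclically w.toWord
  set P := reduceCyclically.conjugator w.toWord
  have hdecomp : w = mk P * mk C * (mk P)⁻¹ := by
    rw [inv_mk, mul_mk, mul_mk, reduceCyclically.conj_conjugator_reduceCyclically, mk_toWord]
  have hlen : C.length ≤ w.toWord.length := by
    conv_rhs => rw [← reduceCyclically.conj_conjugator_reduceCyclically w.toWord]
    simp only [List.length_append, C]
    omega
  have hCmem : mk C ∈ ⁅N, N⁆ := by
    have hconj : mk C = (mk P)⁻¹ * w * (mk P)⁻¹⁻¹ := by rw [hdecomp]; group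
    exact hconj ▸ (Subgroup.commutator_normal N N).conj_mem w hmem (mk P)⁻¹
  have hCne : C ≠ [] := by
    rintro hC
    rw [hC, ← one_eq_mk, mul_one, mul_inv_cancel] at hdecomp
    exact hw hdecomp
  refine le_trans ?_ hlen
  refine three_mul_le_length_of_isCyclicallyReduced (QuotientGroup.mk' N) ?_
    (reduceCyclically.isCyclicallyReduced isReduced_toWord) hCne ?_
  · simpa using hm
  · rwa [QuotientGroup.ker_mk']

theorem three_pow_le_length_of_mem_derivedSeries {d : ℕ} {w : FreeGroup α} (hw : w ≠ 1)
    (hmem : w ∈ derivedSeries (FreeGroup α) d) : 3 ^ d ≤ w.toWord.length := by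
  induction d generalizing w with
  | zero => simpa [Nat.one_le_iff_ne_zero] using hw
  | succ d ih =>
    rw [pow_succ, mul_comm]
    exact three_mul_le_length_of_mem_commutator (fun v hv hv1 => ih hv1 hv) hw hmem

end FreeGroup

/-- If `w` is a nontrivial element of the free group of rank `r` lying in the `d`-th derived
subgroup `F^{(d)}` (i.e. `w = 1` in the free solvable group `S_{r,d} = F/F^{(d)}`), then the
length of the reduced word representing `w` is at least `3^d`. -/
theorem stmt2 (r d : ℕ) (w : FreeGroup (Fin r)) (hw : w ≠ 1)
    (hmem : w ∈ derivedSeries (FreeGroup (Fin r)) d) :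
    3 ^ d ≤ w.toWord.length :=
  FreeGroup.three_pow_le_length_of_mem_derivedSeries hw hmem
end

section
/- Let N be a normal subgroup of the free group F and let u, v ∈ F. Then u = v in F/[N,N] if and only if u and v define the same flow on the Cayley graph of F/N. -/
/-!
The flow of a word is a crossed homomorphism: the flow of `u * v` from `g` is the flow of `u`
from `g` plus the flow of `v` from the endpoint `g * ū`, where `ū` is the image of `u` in `F/N`.
On `N = ker (F → F/N)` this makes the flow additive, so it vanishes on `[N, N]`, which gives
one direction.

Conversely, with a transversal `s` of `N`, the Reidemeister–Schreier rewriting expresses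
`s(g) u s(g ū)⁻¹` as the product, along the path of `u` from `g`, of the Schreier generators
`s(h) x s(h x)⁻¹ ∈ N` with signs. These commute in `F/[N, N]`, so there the product depends
only on the flow. Since the boundary of the flow of `u` from `1` is `ū - 1`, the flow also
determines `ū`, and equal flows give equal images in `F/[N, N]`.
-/

open scoped Classical

/-- The flow defined by a word (list of signed letters) traced in the Cayley graph of a
group `G` with respect to generators `emb : X → G`, starting at a given vertex.
For the positive edge from vertex `a` labeled `y` (going from `a` to `a * emb y`) it
records the algebraic number of traversals. -/
noncomputable def grpFlow {G X : Type*} [Group G] (emb : X → G) :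
    G → List (X × Bool) → G → X → ℤ
  | _, [], _, _ => 0
  | g, (x, true) :: c, a, y =>
      (if a = g ∧ y = x then 1 else 0) + grpFlow emb (g * emb x) c a y
  | g, (x, false) :: c, a, y =>
      (if a = g * (emb x)⁻¹ ∧ y = x then -1 else 0) + grpFlow emb (g * (emb x)⁻¹) c a y

namespace CayleyFlow

open FreeGroup

section Flow

variable {G X : Type*} [Group G] (emb : X → G)

noncomputable def wordFlow : G → List (X × Bool) → (G × X) →₀ ℤ
  | _, [] => 0
  | g, (x, true) :: w => Finsupp.single (g, x) 1 + wordFlow (g * emb x) w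
  | g, (x, false) :: w =>
      Finsupp.single (g * (emb x)⁻¹, x) (-1) + wordFlow (g * (emb x)⁻¹) w

theorem wordFlow_apply (g : G) (w : List (X × Bool)) (a : G) (y : X) :
    wordFlow emb g w (a, y) = grpFlow emb g w a y := by
  induction w generalizing g with
  | nil => simp [wordFlow, grpFlow]
  | cons p w ih =>
    obtain ⟨x, _ | _⟩ := p <;>
      simp [wordFlow, grpFlow, ih, Finsupp.single_apply, Prod.ext_iff, eq_comm, apply_ite]

theorem wordFlow_append (g : G) (w w' : List (X × Bool)) :
    wordFlow emb g (w ++ w') = wordFlow emb g w + wordFlow emb (g * lift emb (mk w)) w' := by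
  induction w generalizing g with
  | nil => simp [wordFlow, ← one_eq_mk]
  | cons p w ih =>
    obtain ⟨x, _ | _⟩ := p <;> simp [wordFlow, ih, lift_mk, add_assoc, mul_assoc]

theorem wordFlow_eq_of_red {w w' : List (X × Bool)} (h : Red w w') (g : G) :
    wordFlow emb g w = wordFlow emb g w' := by
  induction h with
  | refl => rfl
  | tail _ step ih =>
    rw [ih]
    obtain @⟨L₁, L₂, x, b⟩ := step
    rw [wordFlow_append, wordFlow_append]
    cases b <;> simp [wordFlow, mul_assoc]

noncomputable def boundary : ((G × X) →₀ ℤ) →+ (G →₀ ℤ) :=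
  Finsupp.liftAddHom fun p =>
    zmultiplesHom _ (Finsupp.single (p.1 * emb p.2) 1 - Finsupp.single p.1 1)

@[simp] theorem boundary_single (p : G × X) (n : ℤ) :
    boundary emb (Finsupp.single p n) =
      n • (Finsupp.single (p.1 * emb p.2) 1 - Finsupp.single p.1 1) := by
  simp [boundary]

theorem boundary_wordFlow (g : G) (w : List (X × Bool)) :
    boundary emb (wordFlow emb g w) =
      Finsupp.single (g * lift emb (mk w)) 1 - Finsupp.single g 1 := by
  induction w generalizing g with
  | nil => simp [wordFlow, ← one_eq_mk]
  | cons p w ih =>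
    obtain ⟨x, _ | _⟩ := p <;> simp [wordFlow, ih, lift_mk, mul_assoc]

noncomputable def flow (u : FreeGroup X) (g : G) : (G × X) →₀ ℤ :=
  wordFlow emb g u.toWord

theorem flow_mul (u v : FreeGroup X) (g : G) :
    flow emb (u * v) g = flow emb u g + flow emb v (g * lift emb u) := by
  rw [flow, toWord_mul, ← wordFlow_eq_of_red emb reduce.red, wordFlow_append, mk_toWord]
  rfl

@[simp] theorem flow_one (g : G) : flow emb 1 g = 0 := by
  simp [flow, wordFlow]

@[simp] theorem flow_of (x : X) (g : G) : flow emb (of x) g = Finsupp.single (g, x) 1 := by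
  simp [flow, toWord_of, wordFlow]

theorem flow_inv (u : FreeGroup X) (g : G) :
    flow emb u⁻¹ g = -flow emb u (g * (lift emb u)⁻¹) := by
  have := flow_mul emb u⁻¹ u g
  rw [inv_mul_cancel, flow_one, map_inv (lift emb)] at this
  exact eq_neg_of_add_eq_zero_left this.symm

theorem lift_eq_of_flow_eq {u v : FreeGroup X} {g : G} (h : flow emb u g = flow emb v g) :
    lift emb u = lift emb v := by
  have hb := congrArg (boundary emb) h
  rw [flow, flow, boundary_wordFlow, boundary_wordFlow, mk_toWord, mk_toWord, sub_left_inj,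
    Finsupp.single_left_inj one_ne_zero] at hb
  exact mul_left_cancel hb

noncomputable def flowKer : Subgroup (FreeGroup X) where
  carrier := {c | ∀ g, flow emb c g = 0}
  one_mem' := flow_one emb
  mul_mem' {a b} ha hb g := by rw [flow_mul, ha, hb, add_zero]
  inv_mem' {a} ha g := by rw [flow_inv, ha, neg_zero]

theorem commutator_ker_le_flowKer : ⁅(lift emb).ker, (lift emb).ker⁆ ≤ flowKer emb := by
  refine Subgroup.commutator_le.2 fun a ha b hb g => ?_
  rw [MonoidHom.mem_ker] at ha hb
  simp [commutatorElement_def, flow_mul, flow_inv, ha, hb]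

theorem flow_eq_of_inv_mul_mem_flowKer {u v : FreeGroup X} (h : u⁻¹ * v ∈ flowKer emb)
    (g : G) : flow emb u g = flow emb v g := by
  rw [← mul_inv_cancel_left u v, flow_mul, h, add_zero]

theorem grpFlow_toWord_eq_iff (g : G) (u v : FreeGroup X) :
    grpFlow emb g u.toWord = grpFlow emb g v.toWord ↔ flow emb u g = flow emb v g := by
  simp only [funext_iff, Finsupp.ext_iff, Prod.forall, flow, wordFlow_apply]

end Flow

section Cocycle

variable {G M X : Type*} [Group G] [Group M]

def IsCocycle (φ : FreeGroup X →* G) (c : FreeGroup X → G → M) : Prop :=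
  ∀ a b g, c (a * b) g = c a g * c b (g * φ a)

namespace IsCocycle

variable {φ : FreeGroup X →* G} {c c' : FreeGroup X → G → M}

theorem map_one (hc : IsCocycle φ c) (g : G) : c 1 g = 1 := by
  simpa using hc 1 1 g

theorem map_inv (hc : IsCocycle φ c) (a : FreeGroup X) (g : G) :
    c a⁻¹ g = (c a (g * φ a⁻¹))⁻¹ := by
  rw [eq_inv_iff_mul_eq_one, ← hc, inv_mul_cancel, hc.map_one]

theorem ext (hc : IsCocycle φ c) (hc' : IsCocycle φ c')
    (h : ∀ x g, c (of x) g = c' (of x) g) : c = c' := by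
  suffices ∀ u g, c u g = c' u g from funext fun u => funext (this u)
  intro u
  induction u using FreeGroup.induction_on with
  | C1 => simp [hc.map_one, hc'.map_one]
  | of x => exact h x
  | inv_of x ih => intro g; rw [hc.map_inv, hc'.map_inv, ih]
  | mul a b iha ihb => intro g; rw [hc, hc', iha, ihb]

end IsCocycle

end Cocycle

section Schreier

open scoped IsMulCommutative

variable {X : Type*} (N : Subgroup (FreeGroup X)) [N.Normal]

local notation "Γ" => FreeGroup X ⧸ N

theorem lift_mk_of : lift (fun x => (of x : Γ)) = QuotientGroup.mk' N :=
  ext_hom _ _ fun _ => by simp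

noncomputable def schreierGen (g : Γ) (x : X) : FreeGroup X :=
  g.out * of x * (g * (of x : Γ)).out⁻¹

theorem schreierGen_mem (g : Γ) (x : X) : schreierGen N g x ∈ N := by
  rw [← QuotientGroup.eq_one_iff, schreierGen]
  simp

instance : IsMulCommutative (N.map (QuotientGroup.mk' ⁅N, N⁆)) := ⟨⟨by
  rintro ⟨_, a, ha, rfl⟩ ⟨_, b, hb, rfl⟩
  apply Subtype.ext
  show (a : FreeGroup X ⧸ ⁅N, N⁆) * b = b * a
  rw [← commutatorElement_eq_one_iff_mul_comm]
  exact (QuotientGroup.eq_one_iff _).2 (Subgroup.commutator_mem_commutator ha hb)⟩⟩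

noncomputable def schreierPairing :
    ((Γ × X) →₀ ℤ) →+ Additive (N.map (QuotientGroup.mk' ⁅N, N⁆)) :=
  Finsupp.liftAddHom fun p => zmultiplesHom _
    (.ofMul ⟨QuotientGroup.mk (schreierGen N p.1 p.2), _, schreierGen_mem N p.1 p.2, rfl⟩)

theorem mk_out_mul (u : FreeGroup X) (g : Γ) :
    (QuotientGroup.mk (g.out * u) : FreeGroup X ⧸ ⁅N, N⁆) =
      ((schreierPairing N (flow (fun x => (of x : Γ)) u g)).toMul : FreeGroup X ⧸ ⁅N, N⁆) *
        QuotientGroup.mk (g * u).out := by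
  rw [← mul_inv_eq_iff_eq_mul]
  revert u g
  refine congrFun₂ (IsCocycle.ext (φ := QuotientGroup.mk' N) ?_ ?_ fun x g => ?_)
  · intro a b g
    simp only [QuotientGroup.mk_mul, QuotientGroup.mk'_apply, mul_assoc]
    group
  · intro a b g
    dsimp only
    rw [flow_mul, lift_mk_of, map_add, toMul_add, Subgroup.coe_mul]
  · simp [schreierPairing, schreierGen]

theorem mk_eq_of_flow_eq {u v : FreeGroup X} (h : flow (fun x => (of x : Γ)) u 1 =
      flow (fun x => (of x : Γ)) v 1) :
    (u : FreeGroup X ⧸ ⁅N, N⁆) = v := by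
  have hend := lift_eq_of_flow_eq _ h
  rw [lift_mk_of, QuotientGroup.mk'_apply, QuotientGroup.mk'_apply] at hend
  have hu := mk_out_mul N u 1
  have hv := mk_out_mul N v 1
  rw [h, hend, ← hv, QuotientGroup.mk_mul, QuotientGroup.mk_mul] at hu
  exact mul_left_cancel hu

end Schreier

end CayleyFlow

/-- For a normal subgroup `N` of a free group `F`, two elements `u, v` are equal in
`F/[N,N]` if and only if they define the same flow on the Cayley graph of `F/N`. -/
theorem stmt3 {X : Type} (N : Subgroup (FreeGroup X)) [N.Normal] (u v : FreeGroup X) :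
    (QuotientGroup.mk u : FreeGroup X ⧸ ⁅N, N⁆) = QuotientGroup.mk v ↔
      grpFlow (fun x => (QuotientGroup.mk (FreeGroup.of x) : FreeGroup X ⧸ N)) 1 u.toWord =
      grpFlow (fun x => (QuotientGroup.mk (FreeGroup.of x) : FreeGroup X ⧸ N)) 1 v.toWord := by
  set emb := fun x => (QuotientGroup.mk (FreeGroup.of x) : FreeGroup X ⧸ N)
  have hker : (FreeGroup.lift emb).ker = N := by
    rw [CayleyFlow.lift_mk_of, QuotientGroup.ker_mk']
  rw [CayleyFlow.grpFlow_toWord_eq_iff]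
  refine ⟨fun h => ?_, CayleyFlow.mk_eq_of_flow_eq N⟩
  have hcomm : u⁻¹ * v ∈ ⁅(FreeGroup.lift emb).ker, (FreeGroup.lift emb).ker⁆ := by
    rw [hker]
    exact QuotientGroup.eq.1 h
  exact CayleyFlow.flow_eq_of_inv_mul_mem_flowKer emb
    (CayleyFlow.commutator_ker_le_flowKer emb hcomm) 1
end

section
/- Let N be a normal subgroup of the free group F and γ: ℤF → ℤ(F/N) the canonical ring epimorphism. For u ∈ F, all Fox derivatives (∂u/∂x_i)^γ vanish (for i = 1, …, r) if and only if u ∈ [N,N]. -/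
/-!
The Fox derivatives are derivations `F → ℤF`, `∂(uv) = ∂u + u ∂v`, and satisfy the fundamental
formula `u - 1 = ∑ᵢ (∂u/∂xᵢ)(xᵢ - 1)`. Composed with `γ` and restricted to `N`, a derivation
becomes a homomorphism into the abelian group `ℤ(F/N)`, so it kills `[N, N]`.

Conversely, suppose every `(∂u/∂xᵢ)^γ` vanishes. Applying `γ` to the fundamental formula gives
`ū = 1`, i.e. `u ∈ N`. Choosing coset representatives `s`, the additive map `θ : ℤF → N^ab`,
`g ↦ [g s(ḡ)⁻¹]`, has the property that `θ(a g) - θ(a)` depends only on `a^γ`; applying `θ` to the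
fundamental formula therefore gives `[u] = 0` in `N^ab`, i.e. `u ∈ [N, N]`.
-/

open scoped Classical

/-- The Fox derivative `∂u/∂x_i ∈ ℤF` of a word (given as a list of signed letters),
accumulated with current prefix `p`:
`∂u/∂x_i = Σ_{j: i_j=i, ε_j=1} x_{i_1}^{ε_1}···x_{i_{j-1}}^{ε_{j-1}}
 − Σ_{j: i_j=i, ε_j=−1} x_{i_1}^{ε_1}···x_{i_j}^{ε_j}`. -/
noncomputable def foxDeriv {r : ℕ} (i : Fin r) :
    FreeGroup (Fin r) → List (Fin r × Bool) → MonoidAlgebra ℤ (FreeGroup (Fin r))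
  | _, [] => 0
  | p, (x, true) :: c =>
      (if x = i then MonoidAlgebra.single p (1 : ℤ) else 0) +
        foxDeriv i (p * FreeGroup.of x) c
  | p, (x, false) :: c =>
      (if x = i then -MonoidAlgebra.single (p * (FreeGroup.of x)⁻¹) (1 : ℤ) else 0) +
        foxDeriv i (p * (FreeGroup.of x)⁻¹) c

open MonoidAlgebra

section FoxDerivation

variable {R G : Type*} [Ring R] [Group G]

lemma mapDomainRingHom_mk'_single_eq_one (N : Subgroup G) [N.Normal] {n : G} (hn : n ∈ N) :
    mapDomainRingHom R (QuotientGroup.mk' N) (single n 1) = 1 := by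
  rw [mapDomainRingHom_apply, mapDomain_single, QuotientGroup.mk'_apply,
    (QuotientGroup.eq_one_iff n).2 hn, one_def]

def IsFoxDerivation (d : G → R[G]) : Prop :=
  ∀ u v, d (u * v) = d u + single u 1 * d v

lemma isFoxDerivation_single_sub_one : IsFoxDerivation fun u : G ↦ single u (1 : R) - 1 := by
  intro u v
  dsimp only
  rw [mul_sub, mul_one, single_mul_single, mul_one]
  abel

namespace IsFoxDerivation

variable {d : G → R[G]}

lemma map_one (hd : IsFoxDerivation d) : d 1 = 0 := by
  simpa [← one_def] using hd 1 1

lemma map_inv (hd : IsFoxDerivation d) (u : G) : d u⁻¹ = -(single u⁻¹ 1 * d u) := by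
  have h := hd u⁻¹ u
  rw [inv_mul_cancel, hd.map_one] at h
  exact (neg_eq_of_add_eq_zero_left h.symm).symm

lemma mul_const (hd : IsFoxDerivation d) (c : R[G]) : IsFoxDerivation fun u ↦ d u * c := by
  intro u v
  simp only [hd u v, add_mul, mul_assoc]

lemma sum {ι : Type*} [Fintype ι] {d : ι → G → R[G]} (hd : ∀ i, IsFoxDerivation (d i)) :
    IsFoxDerivation fun u ↦ ∑ i, d i u := by
  intro u v
  simp only [hd _ u v, Finset.sum_add_distrib, Finset.mul_sum]

lemma eq_of_forall_of {α : Type*} {d e : FreeGroup α → R[FreeGroup α]}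
    (hd : IsFoxDerivation d) (he : IsFoxDerivation e) (h : ∀ x, d (.of x) = e (.of x)) :
    d = e := by
  funext u
  induction u using FreeGroup.induction_on with
  | C1 => rw [hd.map_one, he.map_one]
  | of x => exact h x
  | inv_of x hx => rw [hd.map_inv, he.map_inv, hx]
  | mul u v hu hv => rw [hd, he, hu, hv]

lemma map_eq_zero_of_mem_commutator (hd : IsFoxDerivation d) (N : Subgroup G) [N.Normal]
    {u : G} (hu : u ∈ ⁅N, N⁆) : mapDomainRingHom R (QuotientGroup.mk' N) (d u) = 0 := by
  let φ : N →* Multiplicative R[G ⧸ N] :=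
    MonoidHom.mk' (fun n ↦ .ofAdd (mapDomainRingHom R (QuotientGroup.mk' N) (d n))) fun m n ↦ by
    simp only [Subgroup.coe_mul, hd m n, map_add, map_mul,
      mapDomainRingHom_mk'_single_eq_one N m.2, one_mul, ofAdd_add]
  rw [← N.map_subtype_commutator] at hu
  obtain ⟨n, hn, rfl⟩ := hu
  exact congrArg Multiplicative.toAdd (Abelianization.commutator_subset_ker φ hn)

end IsFoxDerivation

end FoxDerivation

section CosetCoefficient

variable {G : Type*} [Group G] (N : Subgroup G) [N.Normal]

omit [N.Normal] in
lemma Subgroup.mem_commutator_self_iff {u : G} (hu : u ∈ N) :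
    u ∈ ⁅N, N⁆ ↔ Abelianization.of (⟨u, hu⟩ : N) = 1 := by
  rw [← MonoidHom.mem_ker, Abelianization.ker_of, ← N.map_subtype_commutator,
    ← Subgroup.mem_map_iff_mem N.subtype_injective]
  rfl

lemma mul_inv_out_mem (u : G) : u * (u : G ⧸ N).out⁻¹ ∈ N := by
  rw [← QuotientGroup.eq_one_iff, QuotientGroup.mk_mul, QuotientGroup.mk_inv,
    QuotientGroup.out_eq', mul_inv_cancel]

noncomputable def cosetCoeff (u : G) : Additive (Abelianization N) :=
  .ofMul (.of ⟨u * (u : G ⧸ N).out⁻¹, mul_inv_out_mem N u⟩)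

lemma cosetCoeff_mul_left {n : G} (hn : n ∈ N) (u : G) :
    cosetCoeff N (n * u) = .ofMul (.of ⟨n, hn⟩) + cosetCoeff N u := by
  have hcoset : ((n * u : G) : G ⧸ N) = u := by
    rw [QuotientGroup.mk_mul, (QuotientGroup.eq_one_iff n).2 hn, one_mul]
  rw [cosetCoeff, cosetCoeff, ← ofMul_mul, ← map_mul]
  congr 3
  simp only [hcoset, mul_assoc]

noncomputable def cosetCoeffLinear : ℤ[G] →ₗ[ℤ] Additive (Abelianization N) :=
  Finsupp.linearCombination ℤ (cosetCoeff N) ∘ₗ (coeffLinearEquiv ℤ).toLinearMap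

lemma cosetCoeffLinear_single (u : G) (m : ℤ) :
    cosetCoeffLinear N (single u m) = m • cosetCoeff N u :=
  Finsupp.linearCombination_single ℤ m u

noncomputable def cosetCoeffShift (g : G) :
    ℤ[G ⧸ N] →ₗ[ℤ] Additive (Abelianization N) :=
  Finsupp.linearCombination ℤ (fun q ↦ cosetCoeff N (q.out * g) - cosetCoeff N q.out) ∘ₗ
    (coeffLinearEquiv ℤ).toLinearMap

lemma cosetCoeffShift_single (g : G) (q : G ⧸ N) (m : ℤ) :
    cosetCoeffShift N g (single q m) = m • (cosetCoeff N (q.out * g) - cosetCoeff N q.out) :=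
  Finsupp.linearCombination_single ℤ m q

lemma cosetCoeff_mul_sub (g u : G) :
    cosetCoeff N (u * g) - cosetCoeff N u =
      cosetCoeff N ((u : G ⧸ N).out * g) - cosetCoeff N (u : G ⧸ N).out := by
  have hn := mul_inv_out_mem N u
  have hug := cosetCoeff_mul_left N hn ((u : G ⧸ N).out * g)
  have hu := cosetCoeff_mul_left N hn (u : G ⧸ N).out
  rw [← mul_assoc, inv_mul_cancel_right] at hug
  rw [inv_mul_cancel_right] at hu
  rw [hug, hu, add_sub_add_left_eq_sub]

lemma cosetCoeffLinear_mul_single_sub (g : G) (a : ℤ[G]) :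
    cosetCoeffLinear N (a * single g 1) - cosetCoeffLinear N a =
      cosetCoeffShift N g (mapDomainRingHom ℤ (QuotientGroup.mk' N) a) := by
  induction a using MonoidAlgebra.induction_linear with
  | zero => simp
  | add a b ha hb =>
    rw [add_mul, map_add, map_add, map_add, map_add, ← ha, ← hb]
    abel
  | single u m =>
    rw [single_mul_single, mul_one, cosetCoeffLinear_single, cosetCoeffLinear_single, ← smul_sub,
      cosetCoeff_mul_sub, mapDomainRingHom_apply, mapDomain_single, cosetCoeffShift_single,
      QuotientGroup.mk'_apply]

lemma mem_commutator_of_single_sub_one_eq_sum {ι : Type*} [Fintype ι] {u : G}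
    {a : ι → ℤ[G]} {g : ι → G}
    (hsum : single u 1 - 1 = ∑ i, a i * (single (g i) 1 - 1))
    (ha : ∀ i, mapDomainRingHom ℤ (QuotientGroup.mk' N) (a i) = 0) : u ∈ ⁅N, N⁆ := by
  have hu : u ∈ N := by
    have h := congrArg (mapDomainRingHom ℤ (QuotientGroup.mk' N)) hsum
    simp only [map_sub, map_sum, map_mul, ha, zero_mul, Finset.sum_const_zero, map_one,
      sub_eq_zero, mapDomainRingHom_apply, mapDomain_single, one_def] at h
    exact (QuotientGroup.eq_one_iff u).1 (single_left_injective one_ne_zero h)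
  rw [N.mem_commutator_self_iff hu, ← ofMul_eq_zero]
  have hterm i : cosetCoeffLinear N (a i * (single (g i) 1 - 1)) = 0 := by
    rw [mul_sub, mul_one, map_sub, cosetCoeffLinear_mul_single_sub, ha, map_zero]
  have h := congrArg (cosetCoeffLinear N) hsum
  have hcoeff := cosetCoeff_mul_left N hu 1
  rw [mul_one] at hcoeff
  rwa [map_sum, Finset.sum_eq_zero fun i _ ↦ hterm i, map_sub, one_def, cosetCoeffLinear_single,
    cosetCoeffLinear_single, one_smul, one_smul, hcoeff, add_sub_cancel_right] at h

end CosetCoefficient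

section FoxDerivative

variable {r : ℕ}

lemma FreeGroup.mk_cons {α : Type*} (x : α) (b : Bool) (L : List (α × Bool)) :
    mk ((x, b) :: L) = cond b (of x) (of x)⁻¹ * mk L := by
  cases b <;> rfl

lemma foxDeriv_append (i : Fin r) (L₁ L₂ : List (Fin r × Bool)) (p : FreeGroup (Fin r)) :
    foxDeriv i p (L₁ ++ L₂) = foxDeriv i p L₁ + foxDeriv i (p * FreeGroup.mk L₁) L₂ := by
  induction L₁ generalizing p with
  | nil => simp [foxDeriv, ← FreeGroup.one_eq_mk]
  | cons hd tl ih =>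
    obtain ⟨x, b⟩ := hd
    cases b <;>
    · simp only [List.cons_append, foxDeriv, FreeGroup.mk_cons, cond, ih, mul_assoc, add_assoc]

lemma foxDeriv_mul_left (i : Fin r) (L : List (Fin r × Bool)) (p q : FreeGroup (Fin r)) :
    foxDeriv i (q * p) L = single q 1 * foxDeriv i p L := by
  induction L generalizing p with
  | nil => simp [foxDeriv]
  | cons hd tl ih =>
    obtain ⟨x, b⟩ := hd
    cases b <;>
    · simp only [foxDeriv, mul_assoc, ih, mul_add, single_mul_single, mul_one, mul_ite, mul_zero,
        mul_neg]

lemma foxDeriv_eq_of_red (i : Fin r) {L₁ L₂ : List (Fin r × Bool)} (h : FreeGroup.Red L₁ L₂)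
    (p : FreeGroup (Fin r)) : foxDeriv i p L₁ = foxDeriv i p L₂ := by
  induction h with
  | refl => rfl
  | tail _ hstep ih =>
    refine ih.trans ?_
    cases hstep with
    | @not L L' x b =>
      rw [foxDeriv_append, foxDeriv_append]
      congr 1
      cases b <;>
      · simp only [foxDeriv, mul_inv_cancel_right, inv_mul_cancel_right, Bool.not_true,
          Bool.not_false]
        split <;> simp

noncomputable def foxDerivative (i : Fin r) (u : FreeGroup (Fin r)) :
    ℤ[FreeGroup (Fin r)] :=
  foxDeriv i 1 u.toWord

lemma foxDerivative_mk (i : Fin r) (L : List (Fin r × Bool)) :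
    foxDerivative i (FreeGroup.mk L) = foxDeriv i 1 L := by
  rw [foxDerivative, FreeGroup.toWord_mk]
  exact (foxDeriv_eq_of_red i FreeGroup.reduce.red 1).symm

lemma isFoxDerivation_foxDerivative (i : Fin r) : IsFoxDerivation (foxDerivative i) := by
  intro u v
  have hshift := foxDeriv_mul_left i v.toWord 1 u
  rw [mul_one] at hshift
  conv_lhs => rw [← u.mk_toWord, ← v.mk_toWord]
  rw [FreeGroup.mul_mk, foxDerivative_mk, foxDeriv_append, one_mul, FreeGroup.mk_toWord, hshift]
  rfl

lemma foxDerivative_of (i x : Fin r) :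
    foxDerivative i (FreeGroup.of x) = if x = i then 1 else 0 := by
  simp [foxDerivative, FreeGroup.toWord_of, foxDeriv, one_def]

lemma single_sub_one_eq_sum_foxDerivative (u : FreeGroup (Fin r)) :
    single u (1 : ℤ) - 1 = ∑ i, foxDerivative i u * (single (FreeGroup.of i) 1 - 1) := by
  have hrhs := IsFoxDerivation.sum fun i : Fin r ↦
    (isFoxDerivation_foxDerivative i).mul_const (single (FreeGroup.of i) 1 - 1)
  refine congrFun (isFoxDerivation_single_sub_one.eq_of_forall_of hrhs fun x ↦ ?_) u
  simp [foxDerivative_of]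

end FoxDerivative

/-- Fox's theorem: for a normal subgroup `N` of the free group `F` and
`γ : ℤF → ℤ(F/N)` the canonical ring epimorphism, all Fox derivatives of `u ∈ F`
are killed by `γ` if and only if `u ∈ [N,N]`. -/
theorem stmt4 {r : ℕ} (N : Subgroup (FreeGroup (Fin r))) [N.Normal]
    (u : FreeGroup (Fin r)) :
    (∀ i : Fin r,
      MonoidAlgebra.mapDomainRingHom ℤ (QuotientGroup.mk' N) (foxDeriv i 1 u.toWord) = 0) ↔
    u ∈ ⁅N, N⁆ :=
  ⟨mem_commutator_of_single_sub_one_eq_sum N (single_sub_one_eq_sum_foxDerivative u),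
    fun hu i ↦ (isFoxDerivation_foxDerivative i).map_eq_zero_of_mem_commutator N hu⟩
end

section
/- Let N be a normal subgroup of the free group F = F(x_1,…,x_r), let T be the free left ℤ(F/N)-module with basis t_1,…,t_r, and let M(F/N) be the group of 2×2 matrices of the form [[g, t],[0,1]] with g ∈ F/N, t ∈ T, under matrix multiplication. The homomorphism φ: F → M(F/N) sending x_i to [[x_i^γ, t_i],[0,1]] has kernel exactly [N,N]; hence it induces an embedding of F/[N,N] into M(F/N). -/
/-- The Magnus matrix group `M(F/N)`: matrices `[[g, t],[0,1]]` with `g ∈ Q = F/N` and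
`t` in the free left `ℤQ`-module of rank `r` with basis `t_1,…,t_r`, under matrix
multiplication `[[g,t],[0,1]]·[[g',t'],[0,1]] = [[gg', g·t' + t],[0,1]]`. -/
structure Magnus (Q : Type*) [Group Q] (r : ℕ) where
  g : Q
  t : Fin r → MonoidAlgebra ℤ Q

namespace Magnus

variable {Q : Type*} [Group Q] {r : ℕ}

theorem ext' : ∀ {x y : Magnus Q r}, x.g = y.g → x.t = y.t → x = y := by
  rintro ⟨g1, t1⟩ ⟨g2, t2⟩ rfl rfl; rfl

noncomputable instance : One (Magnus Q r) := ⟨⟨1, 0⟩⟩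

noncomputable instance : Mul (Magnus Q r) :=
  ⟨fun a b => ⟨a.g * b.g, fun i => a.t i + MonoidAlgebra.single a.g (1 : ℤ) * b.t i⟩⟩

noncomputable instance : Inv (Magnus Q r) :=
  ⟨fun a => ⟨a.g⁻¹, fun i => -(MonoidAlgebra.single a.g⁻¹ (1 : ℤ) * a.t i)⟩⟩

@[simp] theorem mul_g (a b : Magnus Q r) : (a * b).g = a.g * b.g := rfl
@[simp] theorem mul_t (a b : Magnus Q r) (i : Fin r) :
    (a * b).t i = a.t i + MonoidAlgebra.single a.g (1 : ℤ) * b.t i := rfl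
@[simp] theorem one_g : (1 : Magnus Q r).g = 1 := rfl
@[simp] theorem one_t (i : Fin r) : (1 : Magnus Q r).t i = 0 := rfl
@[simp] theorem inv_g (a : Magnus Q r) : a⁻¹.g = a.g⁻¹ := rfl
@[simp] theorem inv_t (a : Magnus Q r) (i : Fin r) :
    a⁻¹.t i = -(MonoidAlgebra.single a.g⁻¹ (1 : ℤ) * a.t i) := rfl

noncomputable instance : Group (Magnus Q r) where
  mul_assoc a b c := ext' (mul_assoc _ _ _) (by
    funext i
    simp [mul_add, add_assoc, ← mul_assoc, MonoidAlgebra.single_mul_single])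
  one_mul a := ext' (one_mul _) (by
    funext i
    simp [← MonoidAlgebra.one_def])
  mul_one a := ext' (mul_one _) (by funext i; simp)
  inv_mul_cancel a := ext' (inv_mul_cancel _) (by funext i; simp)

end Magnus

/-!
Elements of `Magnus Q r` with trivial `g`-part commute, and `φ` maps `N` into them, so
`[N, N] ≤ ker φ`. Conversely, let `φ w = 1`. Then `w ∈ N`, and the Fox derivatives `∂w/∂xᵢ`,
which are the `t`-coordinates of the lift of `w` to `Magnus F r`, vanish in `ℤ(F/N)`.
For a transversal `s` of `N`, the `ℤ`-linear extension `θ : ℤF → N^ab` of `f ↦ [f s(fN)⁻¹]`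
satisfies `θ(z (u - 1)) = 0` whenever `z` vanishes in `ℤ(F/N)`, because `θ(fu) - θ(f)` only
depends on `fN`. Applying `θ` to Fox's formula `w - 1 = ∑ᵢ (∂w/∂xᵢ)(xᵢ - 1)` gives
`[w] = θ(w) - θ(1) = 0` in `N^ab`, that is, `w ∈ [N, N]`.
-/

open MonoidAlgebra

noncomputable def MonoidAlgebra.intLift {M A : Type*} [AddCommGroup A] (f : M → A) :
    MonoidAlgebra ℤ M →+ A :=
  (Finsupp.liftAddHom fun m => zmultiplesHom A (f m)).comp coeffAddEquiv.toAddMonoidHom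

@[simp] theorem MonoidAlgebra.intLift_single {M A : Type*} [AddCommGroup A] (f : M → A)
    (m : M) (n : ℤ) : intLift f (single m n) = n • f m := by
  simp [intLift, coeff_single]

namespace Subgroup

variable {G : Type*} [Group G]

theorem mem_commutator_of_abelianization_of_eq_one {H : Subgroup G} {x : H}
    (hx : Abelianization.of x = 1) : (x : G) ∈ ⁅H, H⁆ :=
  H.map_subtype_commutator ▸ ⟨x, Abelianization.ker_of (G := H) ▸ hx, rfl⟩

variable (N : Subgroup G) [N.Normal]

theorem mul_inv_out_mem (f : G) : f * (f : G ⧸ N).out⁻¹ ∈ N := by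
  rw [← QuotientGroup.eq_one_iff]
  simp

theorem out_mul_mul_inv_out_mem (q : G ⧸ N) (u : G) : q.out * u * (q * u).out⁻¹ ∈ N := by
  rw [← QuotientGroup.eq_one_iff]
  simp

noncomputable def transversalClass (f : G) : Additive (Abelianization N) :=
  .ofMul (.of ⟨f * (f : G ⧸ N).out⁻¹, N.mul_inv_out_mem f⟩)

noncomputable def transversalDefect (u : G) (q : G ⧸ N) : Additive (Abelianization N) :=
  .ofMul (.of ⟨q.out * u * (q * u).out⁻¹, N.out_mul_mul_inv_out_mem q u⟩)

theorem transversalClass_mul (f u : G) :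
    N.transversalClass (f * u) = N.transversalClass f + N.transversalDefect u f := by
  rw [transversalClass, transversalClass, transversalDefect, ← ofMul_mul, ← map_mul]
  congr 2
  ext
  simp [mul_assoc]

theorem transversalClass_of_mem {w : G} (hw : w ∈ N) :
    N.transversalClass w = .ofMul (.of ⟨w, hw⟩) + N.transversalClass 1 := by
  rw [transversalClass, transversalClass, ← ofMul_mul, ← map_mul]
  congr 2
  ext
  simp [(QuotientGroup.eq_one_iff w).2 hw]

theorem intLift_transversalClass_mul_single_sub_one (z : MonoidAlgebra ℤ G) (u : G) :
    intLift N.transversalClass (z * (single u 1 - 1)) =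
      intLift (N.transversalDefect u) (mapDomain (QuotientGroup.mk' N) z) := by
  induction z using MonoidAlgebra.induction_linear with
  | zero => simp
  | add x y hx hy => simp only [add_mul, map_add, mapDomain_add, hx, hy]
  | single f n =>
    simp [mul_sub, single_mul_single, mapDomain_single, transversalClass_mul]

end Subgroup

namespace Magnus

variable {Q Q' : Type*} [Group Q] [Group Q'] {r : ℕ}

theorem commute_of_g_eq_one {a b : Magnus Q r} (ha : a.g = 1) (hb : b.g = 1) :
    Commute a b :=
  ext' (by simp [ha, hb]) (funext fun i => by simp [ha, hb, ← one_def, add_comm])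

noncomputable def map (f : Q →* Q') : Magnus Q r →* Magnus Q' r where
  toFun a := ⟨f a.g, fun i => mapDomainRingHom ℤ f (a.t i)⟩
  map_one' := ext' (map_one f) (funext fun _ => map_zero _)
  map_mul' a b := ext' (map_mul f _ _) (funext fun i => by
    simp only [mul_t, map_add, map_mul, mapDomainRingHom_apply, mapDomain_single])

@[simp] theorem map_g (f : Q →* Q') (a : Magnus Q r) : (map f a).g = f a.g := rfl

@[simp] theorem map_t (f : Q →* Q') (a : Magnus Q r) (i : Fin r) :
    (map f a).t i = mapDomain f (a.t i) := rfl

end Magnus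

namespace FreeGroup

variable {Q Q' : Type*} [Group Q] [Group Q'] {r : ℕ}

noncomputable def magnusHom (γ : FreeGroup (Fin r) →* Q) : FreeGroup (Fin r) →* Magnus Q r :=
  lift fun i => ⟨γ (of i), fun j => if j = i then 1 else 0⟩

theorem magnusHom_g (γ : FreeGroup (Fin r) →* Q) (w : FreeGroup (Fin r)) :
    (magnusHom γ w).g = γ w := by
  induction w with
  | C1 => simp
  | of i => simp [magnusHom]
  | inv_of i h => simp [h]
  | mul u v hu hv => simp [hu, hv]

theorem map_comp_magnusHom (f : Q →* Q') (γ : FreeGroup (Fin r) →* Q) :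
    (Magnus.map f).comp (magnusHom γ) = magnusHom (f.comp γ) := by
  refine ext_hom _ _ fun i => Magnus.ext' (by simp [magnusHom]) (funext fun j => ?_)
  simp only [MonoidHom.comp_apply, magnusHom, lift_apply_of, Magnus.map_t]
  split_ifs <;> simp

/-- Fox's fundamental formula `w - 1 = ∑ᵢ (∂w/∂xᵢ)(xᵢ - 1)` pushed forward along `γ`: the
`t`-coordinates of `magnusHom γ w` are the images of the Fox derivatives of `w`. -/
theorem single_sub_one_eq_sum_magnusHom_t (γ : FreeGroup (Fin r) →* Q) (w : FreeGroup (Fin r)) :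
    single (γ w) (1 : ℤ) - 1 = ∑ i, (magnusHom γ w).t i * (single (γ (of i)) 1 - 1) := by
  induction w with
  | C1 => simp [← one_def]
  | of i => simp [magnusHom, ite_mul]
  | inv_of i _ =>
    rw [Finset.sum_eq_single i (fun j _ hj => by simp [magnusHom, hj]) (by simp)]
    simp [magnusHom, mul_sub, single_mul_single, ← one_def]
    abel
  | mul u v hu hv =>
    have expand : single (γ (u * v)) (1 : ℤ) - 1 =
        single (γ u) 1 * (single (γ v) 1 - 1) + (single (γ u) 1 - 1) := by
      rw [mul_sub, single_mul_single, γ.map_mul]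
      simp
    rw [expand, hu, hv, Finset.mul_sum, ← Finset.sum_add_distrib]
    refine Finset.sum_congr rfl fun i _ => ?_
    rw [(magnusHom γ).map_mul, Magnus.mul_t, magnusHom_g, add_mul, mul_assoc, add_comm]

theorem commutator_ker_le_ker_magnusHom (γ : FreeGroup (Fin r) →* Q) :
    ⁅γ.ker, γ.ker⁆ ≤ (magnusHom γ).ker := by
  rw [Subgroup.commutator_le]
  intro a ha b hb
  rw [MonoidHom.mem_ker, map_commutatorElement, commutatorElement_eq_one_iff_commute]
  exact Magnus.commute_of_g_eq_one (by rwa [magnusHom_g]) (by rwa [magnusHom_g])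

theorem ker_magnusHom_mk'_le (N : Subgroup (FreeGroup (Fin r))) [N.Normal] :
    (magnusHom (QuotientGroup.mk' N)).ker ≤ ⁅N, N⁆ := by
  intro w hw
  have hD : Magnus.map (QuotientGroup.mk' N) (magnusHom (.id _) w) = 1 := by
    rw [← MonoidHom.comp_apply, map_comp_magnusHom]
    exact hw
  have hwN : w ∈ N := by simpa [magnusHom_g] using congrArg Magnus.g hD
  have hDt (i : Fin r) : mapDomain (QuotientGroup.mk' N) ((magnusHom (.id _) w).t i) = 0 :=
    congrArg (Magnus.t · i) hD
  have hfox : intLift N.transversalClass (single w 1 - 1) = 0 := by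
    simpa only [MonoidHom.id_apply, map_sum, Subgroup.intLift_transversalClass_mul_single_sub_one,
      hDt, map_zero, Finset.sum_const_zero] using
      congrArg (intLift N.transversalClass) (single_sub_one_eq_sum_magnusHom_t (.id _) w)
  rw [map_sub, one_def, intLift_single, intLift_single, one_smul, one_smul,
    N.transversalClass_of_mem hwN, add_sub_cancel_right, ofMul_eq_zero] at hfox
  exact Subgroup.mem_commutator_of_abelianization_of_eq_one hfox

end FreeGroup

/-- The Magnus embedding: for a normal subgroup `N` of the free group `F = F(x_1,…,x_r)`,
the homomorphism `φ : F → M(F/N)` sending `x_i` to `[[x_i^γ, t_i],[0,1]]` has kernel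
exactly `[N,N]`; hence it induces an embedding `F/[N,N] ↪ M(F/N)`. -/
theorem stmt5 {r : ℕ} (N : Subgroup (FreeGroup (Fin r))) [N.Normal] :
    MonoidHom.ker
        (FreeGroup.lift (fun i =>
          (⟨QuotientGroup.mk (FreeGroup.of i),
            fun j => if j = i then 1 else 0⟩ :
              Magnus (FreeGroup (Fin r) ⧸ N) r))) = ⁅N, N⁆ ∧
      ∃ ψ : (FreeGroup (Fin r) ⧸ (⁅N, N⁆ : Subgroup (FreeGroup (Fin r)))) →*
          Magnus (FreeGroup (Fin r) ⧸ N) r,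
        Function.Injective ψ ∧
          ∀ u : FreeGroup (Fin r),
            ψ (QuotientGroup.mk u) =
              FreeGroup.lift (fun i =>
                (⟨QuotientGroup.mk (FreeGroup.of i),
                  fun j => if j = i then 1 else 0⟩ :
                    Magnus (FreeGroup (Fin r) ⧸ N) r)) u := by
  have hker : (FreeGroup.magnusHom (QuotientGroup.mk' N)).ker = ⁅N, N⁆ :=
    le_antisymm (FreeGroup.ker_magnusHom_mk'_le N)
      (by simpa using FreeGroup.commutator_ker_le_ker_magnusHom (QuotientGroup.mk' N))
  refine ⟨hker, QuotientGroup.lift _ _ hker.ge, ?_, fun u => QuotientGroup.lift_mk' _ _ u⟩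
  exact (QuotientGroup.injective_lift_iff _ _ _).2 hker.symm
end

section
/- Let w be a reduced word of length k, Γ(w) the path graph of w (vertices the k+1 prefixes of w, edges labeled by the letters of w), and Ω_w the set of folded rooted homomorphic images of Γ(w). For Γ ∈ Ω_w define ι(Γ) ∈ Ω_w whose vertices are the flows π_{w_i} on Γ defined by prefixes w_i of w, with an edge π_{w_{j-1}} → π_{w_j} labeled by the j-th letter of w. Then there is a rooted X-digraph epimorphism ι(Γ) → Γ mapping each flow π_{w_i} to the endpoint of the path traced by w_i in Γ, and the composition Γ(w) → ι(Γ) → Γ equals the canonical epimorphism Γ(w) → Γ. -/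
open scoped Classical

/-- The support graph of the word `w` presented by the vertex-naming function
`ν : ℕ → ℕ` (the image of the path graph `Γ(w)` under `i ↦ ν i`): the root is `ν 0`
and the positive edges are those traversed by `w`, the `j`-th letter `(x, true)` giving
the edge `ν j →^x ν (j+1)` and `(x, false)` giving `ν (j+1) →^x ν j`.
Taking `ν` injective gives the path graph `Γ(w)` itself. -/
def GraphOf {X : Type*} (w : List (X × Bool)) (ν : ℕ → ℕ) : LGraph X ℕ where
  root := ν 0
  edge a x b := ∃ j < w.length,
    (w[j]? = some (x, true) ∧ ν j = a ∧ ν (j + 1) = b) ∨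
    (w[j]? = some (x, false) ∧ ν j = b ∧ ν (j + 1) = a)

/-- The flow defined by the length-`i` prefix of `w` on the support graph `GraphOf w ν`,
as a function assigning to each positive edge `(a, x, b)` the algebraic number of its
traversals. -/
noncomputable def pflow {X : Type*} (w : List (X × Bool)) (ν : ℕ → ℕ) (i : ℕ) :
    ℕ × X × ℕ → ℤ :=
  fun e => ∑ j ∈ Finset.range i,
    ((if w[j]? = some (e.2.1, true) ∧ ν j = e.1 ∧ ν (j + 1) = e.2.2 then 1 else 0) +
     (if w[j]? = some (e.2.1, false) ∧ ν j = e.2.2 ∧ ν (j + 1) = e.1 then -1 else 0))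

/-- The graph `ι(Γ)` of the support graph `Γ = GraphOf w ν`: its vertices are the flows
on `Γ` defined by the prefixes of `w`, with an edge between the flows of consecutive
prefixes labeled by the corresponding letter of `w`. -/
noncomputable def IotaGraph {X : Type*} (w : List (X × Bool)) (ν : ℕ → ℕ) :
    LGraph X ((ℕ × X × ℕ) → ℤ) where
  root := pflow w ν 0
  edge a x b := ∃ j < w.length,
    (w[j]? = some (x, true) ∧ a = pflow w ν j ∧ b = pflow w ν (j + 1)) ∨
    (w[j]? = some (x, false) ∧ a = pflow w ν (j + 1) ∧ b = pflow w ν j)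

/-- A rooted `X`-digraph morphism. -/
def IsMor {X V U : Type*} (G : LGraph X V) (D : LGraph X U) (φ : V → U) : Prop :=
  φ G.root = D.root ∧ ∀ a x b, G.edge a x b → D.edge (φ a) x (φ b)

/-- A rooted `X`-digraph epimorphism: a morphism that is surjective on the edges (hence
on the vertices of the connected graphs considered here). -/
def IsEpiOn {X V U : Type*} (G : LGraph X V) (D : LGraph X U) (φ : V → U) : Prop :=
  IsMor G D φ ∧ ∀ a x b, D.edge a x b → ∃ a' b', G.edge a' x b' ∧ φ a' = a ∧ φ b' = b

/-!
The flow of the prefix `w_i` has boundary `δ_{ν i} - δ_{ν 0}`: pairing it with the coboundary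
`g(head) - g(tail)` of any potential `g` telescopes along the path to `g (ν i) - g (ν 0)`.
Taking for `g` the indicator of `ν i` shows that the flow determines its sink `ν i`, so
`π_{w_i} ↦ ν i` is a well-defined map, and it is an epimorphism `ι(Γ) → Γ` because the edges of
both graphs are indexed by the letters of `w` in the same way.
-/

section Flow

variable {X : Type*}

def letterEdge (u v : ℕ) (l : X × Bool) : ℕ × X × ℕ :=
  if l.2 then (u, l.1, v) else (v, l.1, u)

def letterSign (l : X × Bool) : ℤ :=
  if l.2 then 1 else -1

lemma letterSign_mul_sub (g : ℕ → ℤ) (u v : ℕ) (l : X × Bool) :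
    letterSign l * (g (letterEdge u v l).2.2 - g (letterEdge u v l).1) = g v - g u := by
  rcases l with ⟨x, _ | _⟩ <;> simp [letterEdge, letterSign]

noncomputable def stepFlow (w : List (X × Bool)) (ν : ℕ → ℕ) (j : ℕ) (e : ℕ × X × ℕ) : ℤ :=
  (if w[j]? = some (e.2.1, true) ∧ ν j = e.1 ∧ ν (j + 1) = e.2.2 then 1 else 0) +
    (if w[j]? = some (e.2.1, false) ∧ ν j = e.2.2 ∧ ν (j + 1) = e.1 then -1 else 0)

lemma pflow_apply (w : List (X × Bool)) (ν : ℕ → ℕ) (i : ℕ) (e : ℕ × X × ℕ) :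
    pflow w ν i e = ∑ j ∈ Finset.range i, stepFlow w ν j e :=
  rfl

lemma stepFlow_eq (w : List (X × Bool)) (ν : ℕ → ℕ) {j : ℕ} (hj : j < w.length)
    (e : ℕ × X × ℕ) :
    stepFlow w ν j e =
      if e = letterEdge (ν j) (ν (j + 1)) w[j] then letterSign w[j] else 0 := by
  obtain ⟨a, y, c⟩ := e
  rcases hl : w[j] with ⟨x, _ | _⟩ <;>
    simp [stepFlow, letterEdge, letterSign, List.getElem?_eq_getElem hj, hl] <;> grind

noncomputable def traversedEdges (w : List (X × Bool)) (ν : ℕ → ℕ) : Finset (ℕ × X × ℕ) :=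
  Finset.univ.image fun j : Fin w.length => letterEdge (ν j) (ν (j + 1)) w[j]

def flux (S : Finset (ℕ × X × ℕ)) (g : ℕ → ℤ) (f : ℕ × X × ℕ → ℤ) : ℤ :=
  ∑ e ∈ S, f e * (g e.2.2 - g e.1)

lemma flux_stepFlow (w : List (X × Bool)) (ν : ℕ → ℕ) (g : ℕ → ℤ) {j : ℕ}
    (hj : j < w.length) :
    flux (traversedEdges w ν) g (stepFlow w ν j) = g (ν (j + 1)) - g (ν j) := by
  have hmem : letterEdge (ν j) (ν (j + 1)) w[j] ∈ traversedEdges w ν :=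
    Finset.mem_image_of_mem _ (Finset.mem_univ (⟨j, hj⟩ : Fin w.length))
  simp only [flux, stepFlow_eq w ν hj, ite_mul, zero_mul, Finset.sum_ite_eq', if_pos hmem]
  exact letterSign_mul_sub g _ _ _

lemma flux_pflow (w : List (X × Bool)) (ν : ℕ → ℕ) (g : ℕ → ℤ) {i : ℕ}
    (hi : i ≤ w.length) :
    flux (traversedEdges w ν) g (pflow w ν i) = g (ν i) - g (ν 0) := by
  calc flux (traversedEdges w ν) g (pflow w ν i)
      = ∑ j ∈ Finset.range i, flux (traversedEdges w ν) g (stepFlow w ν j) := by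
        simp only [flux, pflow_apply, Finset.sum_mul]
        exact Finset.sum_comm
    _ = ∑ j ∈ Finset.range i, (g (ν (j + 1)) - g (ν j)) :=
        Finset.sum_congr rfl fun j hj =>
          flux_stepFlow w ν g ((Finset.mem_range.mp hj).trans_le hi)
    _ = g (ν i) - g (ν 0) := Finset.sum_range_sub (fun k => g (ν k)) i

lemma eq_of_pflow_eq (w : List (X × Bool)) (ν : ℕ → ℕ) {i j : ℕ}
    (hi : i ≤ w.length) (hj : j ≤ w.length) (h : pflow w ν i = pflow w ν j) :
    ν i = ν j := by
  let g : ℕ → ℤ := fun n => if n = ν i then 1 else 0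
  have hflux := flux_pflow w ν g hj
  rw [← h, flux_pflow w ν g hi, sub_left_inj] at hflux
  by_contra hne
  simp [g, Ne.symm hne] at hflux

lemma isEpiOn_iotaGraph (w : List (X × Bool)) (ν : ℕ → ℕ) {φ : (ℕ × X × ℕ → ℤ) → ℕ}
    (hφ : ∀ i ≤ w.length, φ (pflow w ν i) = ν i) :
    IsEpiOn (IotaGraph w ν) (GraphOf w ν) φ := by
  refine ⟨⟨hφ 0 (Nat.zero_le _), ?_⟩, ?_⟩
  · rintro a x b ⟨j, hj, ⟨hl, rfl, rfl⟩ | ⟨hl, rfl, rfl⟩⟩ <;>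
      rw [hφ j hj.le, hφ (j + 1) hj]
    exacts [⟨j, hj, .inl ⟨hl, rfl, rfl⟩⟩, ⟨j, hj, .inr ⟨hl, rfl, rfl⟩⟩]
  · rintro a x b ⟨j, hj, ⟨hl, rfl, rfl⟩ | ⟨hl, rfl, rfl⟩⟩
    · exact ⟨_, _, ⟨j, hj, .inl ⟨hl, rfl, rfl⟩⟩, hφ j hj.le, hφ (j + 1) hj⟩
    · exact ⟨_, _, ⟨j, hj, .inr ⟨hl, rfl, rfl⟩⟩, hφ (j + 1) hj, hφ j hj.le⟩

end Flow

theorem stmt10_general {X : Type*} (w : List (X × Bool)) (ν : ℕ → ℕ) :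
    ∃ φ : ((ℕ × X × ℕ) → ℤ) → ℕ,
      IsEpiOn (IotaGraph w ν) (GraphOf w ν) φ ∧
      ∀ i ≤ w.length, φ (pflow w ν i) = ν i := by
  let prefixFlow (i : {i // i ≤ w.length}) : ℕ × X × ℕ → ℤ := pflow w ν i
  let sink (i : {i // i ≤ w.length}) : ℕ := ν i
  have hfactor : sink.FactorsThrough prefixFlow :=
    fun i j h => eq_of_pflow_eq w ν i.2 j.2 h
  let φ := Function.extend prefixFlow sink fun _ => ν 0
  have hφ : ∀ i ≤ w.length, φ (pflow w ν i) = ν i :=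
    fun i hi => hfactor.extend_apply _ ⟨i, hi⟩
  exact ⟨φ, isEpiOn_iotaGraph w ν hφ, hφ⟩

/-- For any support graph `Γ = GraphOf w ν` of a reduced word `w` (a folded rooted inverse
homomorphic image of the path graph `Γ(w)`), there is a rooted `X`-digraph epimorphism
`φ : ι(Γ) → Γ` sending the flow `π_{w_i}` of each prefix to the endpoint `ν i` of the
path traced by that prefix in `Γ`; thus the composition `Γ(w) → ι(Γ) → Γ` equals the
canonical epimorphism `Γ(w) → Γ`, `i ↦ ν i`. -/
theorem stmt10 {X : Type*} (w : List (X × Bool)) (hred : Reduced w) (ν : ℕ → ℕ)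
    (hf : (GraphOf w ν).Folded) (hc : (GraphOf w ν).CoFolded) :
    ∃ φ : ((ℕ × X × ℕ) → ℤ) → ℕ,
      IsEpiOn (IotaGraph w ν) (GraphOf w ν) φ ∧
      ∀ i ≤ w.length, φ (pflow w ν i) = ν i :=
  stmt10_general w ν
end
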